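/- arXiv:2106.12923 — 13 statements merged into one kernel-verified Lean document; each statement's English description precedes it below -/
import Mathlib

section
/- Suppose x* ∈ X attains the minimax value, i.e. sup_{y∈Y} g(x*,y) = V* where V* := inf_{x∈X} sup_{y∈Y} g(x,y) is a (finite) real number, and suppose sup_{y∈Y} Σ_{t=1}^T α_t g(x_t,y) is finite. Then, with ε := (Reg^x + Reg^y)/A_T, the weighted averages form an ε-equilibrium of the game: V* ≤ sup_{y∈Y} g(x̄_T, y) ≤ V* + ε and V* − ε ≤ g(x*, ȳ_T). -/
open scoped BigOperators

/-- Fenchel-game no-regret dynamics: the weighted average plays form an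
`ε`-equilibrium, where `ε` is the sum of the weighted average regrets. -/
theorem weighted_average_plays_form_eps_equilibrium
    {E F : Type*} [AddCommGroup E] [Module ℝ E] [AddCommGroup F] [Module ℝ F]
    (X : Set E) (Y : Set F) (hXne : X.Nonempty) (hYne : Y.Nonempty)
    (hXconv : Convex ℝ X) (hYconv : Convex ℝ Y)
    (g : E → F → ℝ)
    (hgconv : ∀ y ∈ Y, ConvexOn ℝ X (fun x => g x y))
    (hgconc : ∀ x ∈ X, ConcaveOn ℝ Y (fun y => g x y))
    (T : ℕ) (hT : 0 < T)
    (α : Fin T → ℝ) (hα : ∀ t, 0 < α t)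
    (xp : Fin T → E) (yp : Fin T → F)
    (hxp : ∀ t, xp t ∈ X) (hyp : ∀ t, yp t ∈ Y)
    (xstar : E) (hxstar : xstar ∈ X)
    (AT : ℝ) (hAT : AT = ∑ t, α t)
    (xbar : E) (hxbar : xbar = AT⁻¹ • ∑ t, α t • xp t)
    (ybar : F) (hybar : ybar = AT⁻¹ • ∑ t, α t • yp t)
    -- the minimax value `V* := inf_{x ∈ X} sup_{y ∈ Y} g (x, y)` is a finite real number
    (Vstar : ℝ)
    (hVstar : (⨅ x : X, ⨆ y : Y, (g (x : E) (y : F) : EReal)) = (Vstar : EReal))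
    -- `x*` attains the minimax value : `sup_{y ∈ Y} g (x*, y) = V*`
    (hattain : (⨆ y : Y, (g xstar (y : F) : EReal)) = (Vstar : EReal))
    -- `sup_{y ∈ Y} Σ_t α_t g (x_t, y)` is finite
    (hfinite : BddAbove ((fun y => ∑ t, α t * g (xp t) y) '' Y))
    (Regx Regy ε : ℝ)
    (hRegx : Regx = (∑ t, α t * g (xp t) (yp t)) - ∑ t, α t * g xstar (yp t))
    (hRegy : Regy = (∑ t, α t * (-g (xp t) (yp t)))
        - sInf ((fun y => ∑ t, α t * (-g (xp t) y)) '' Y))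
    (hε : ε = (Regx + Regy) / AT) :
    ((Vstar : EReal) ≤ ⨆ y : Y, (g xbar (y : F) : EReal)) ∧
      ((⨆ y : Y, (g xbar (y : F) : EReal)) ≤ ((Vstar + ε : ℝ) : EReal)) ∧
      Vstar - ε ≤ g xstar ybar := by

  have hATpos : 0 < AT := by
    rw [hAT]
    exact Finset.sum_pos (fun t _ => hα t) ⟨⟨0, hT⟩, Finset.mem_univ _⟩
  set w : Fin T → ℝ := fun t => AT⁻¹ * α t with hw
  have hw0 : ∀ t ∈ Finset.univ, 0 ≤ w t := fun t _ =>
    le_of_lt (mul_pos (inv_pos.2 hATpos) (hα t))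
  have hw1 : ∑ t, w t = 1 := by
    simp only [hw, ← Finset.mul_sum, ← hAT]
    exact inv_mul_cancel₀ hATpos.ne'
  have hxbar' : xbar = ∑ t, w t • xp t := by
    rw [hxbar, Finset.smul_sum]
    simp [hw, smul_smul]
  have hybar' : ybar = ∑ t, w t • yp t := by
    rw [hybar, Finset.smul_sum]
    simp [hw, smul_smul]
  have hxbarX : xbar ∈ X := hxbar' ▸ hXconv.sum_mem hw0 hw1 (fun t _ => hxp t)
  have hybarY : ybar ∈ Y := hybar' ▸ hYconv.sum_mem hw0 hw1 (fun t _ => hyp t)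
  -- Jensen inequalities
  have hJx : ∀ y ∈ Y, g xbar y ≤ AT⁻¹ * ∑ t, α t * g (xp t) y := by
    intro y hy
    have := (hgconv y hy).map_sum_le hw0 hw1 (fun t _ => hxp t)
    rw [← hxbar'] at this
    calc g xbar y ≤ ∑ t, w t * g (xp t) y := this
      _ = AT⁻¹ * ∑ t, α t * g (xp t) y := by
          rw [Finset.mul_sum]; exact Finset.sum_congr rfl fun t _ => by ring
  have hJy : AT⁻¹ * ∑ t, α t * g xstar (yp t) ≤ g xstar ybar := by
    have := (hgconc xstar hxstar).le_map_sum hw0 hw1 (fun t _ => hyp t)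
    rw [← hybar'] at this
    calc AT⁻¹ * ∑ t, α t * g xstar (yp t)
        = ∑ t, w t * g xstar (yp t) := by
          rw [Finset.mul_sum]; exact Finset.sum_congr rfl fun t _ => by ring
      _ ≤ g xstar ybar := this
  set P := ∑ t, α t * g (xp t) (yp t) with hP
  set Q := ∑ t, α t * g xstar (yp t) with hQ
  set S := sSup ((fun y => ∑ t, α t * g (xp t) y) '' Y) with hS
  have hSmem : ∀ y ∈ Y, ∑ t, α t * g (xp t) y ≤ S := fun y hy =>
    le_csSup hfinite ⟨y, hy, rfl⟩
  -- Regy = S - P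
  have hfun : (fun y => ∑ t, α t * (-g (xp t) y)) =
      (fun r : ℝ => -r) ∘ (fun y => ∑ t, α t * g (xp t) y) := by
    funext y; simp [mul_neg]
  have hRegy' : Regy = S - P := by
    rw [hRegy, hfun, Set.image_comp]
    have : (fun r : ℝ => -r) '' ((fun y => ∑ t, α t * g (xp t) y) '' Y) =
        -((fun y => ∑ t, α t * g (xp t) y) '' Y) := by
      ext r; simp [Set.mem_neg, eq_comm, neg_eq_iff_eq_neg]
    rw [this, Real.sInf_def, neg_neg, ← hS]
    simp [hP, mul_neg]
    ring
  have hRegx' : Regx = P - Q := hRegx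
  -- Claim 1
  have cl1 : (Vstar : EReal) ≤ ⨆ y : Y, (g xbar (y : F) : EReal) := by
    rw [← hVstar]
    exact iInf_le (fun x : X => ⨆ y : Y, (g (x : E) (y : F) : EReal)) ⟨xbar, hxbarX⟩
  -- sup_y g(xbar, y) ≤ AT⁻¹ * S as ERреal
  have hsupS : (⨆ y : Y, (g xbar (y : F) : EReal)) ≤ ((AT⁻¹ * S : ℝ) : EReal) := by
    refine iSup_le fun y => ?_
    rw [EReal.coe_le_coe_iff]
    exact le_trans (hJx y y.2)
      (mul_le_mul_of_nonneg_left (hSmem y y.2) (inv_nonneg.2 hATpos.le))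
  have hVS : AT * Vstar ≤ S := by
    have h := EReal.coe_le_coe_iff.1 (le_trans cl1 hsupS)
    have := (mul_le_mul_of_nonneg_left h hATpos.le)
    rwa [← mul_assoc, mul_inv_cancel₀ hATpos.ne', one_mul] at this
  -- g xstar ybar ≤ Vstar
  have hgyb : g xstar ybar ≤ Vstar := by
    have : (g xstar ybar : EReal) ≤ ⨆ y : Y, (g xstar (y : F) : EReal) :=
      le_iSup (fun y : Y => (g xstar (y : F) : EReal)) ⟨ybar, hybarY⟩
    rw [hattain] at this
    exact_mod_cast this
  -- Q ≤ AT * g xstar ybar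
  have hQle : Q ≤ AT * g xstar ybar := by
    have := mul_le_mul_of_nonneg_left hJy hATpos.le
    rwa [← mul_assoc, mul_inv_cancel₀ hATpos.ne', one_mul] at this
  have hεeq : ε * AT = Regx + Regy := by
    rw [hε, div_mul_cancel₀ _ hATpos.ne']
  refine ⟨cl1, ?_, ?_⟩
  · -- claim 2
    refine iSup_le fun y => ?_
    rw [EReal.coe_le_coe_iff]
    have h1 : g xbar (y : F) ≤ AT⁻¹ * S :=
      le_trans (hJx y y.2)
        (mul_le_mul_of_nonneg_left (hSmem y y.2) (inv_nonneg.2 hATpos.le))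
    have hSle : S ≤ Regx + Regy + AT * Vstar := by
      have : S = Regy + P := by rw [hRegy']; ring
      have hPQ : P = Regx + Q := by rw [hRegx']; ring
      nlinarith [hQle, mul_le_mul_of_nonneg_left hgyb hATpos.le]
    have : AT⁻¹ * S ≤ AT⁻¹ * (Regx + Regy + AT * Vstar) :=
      mul_le_mul_of_nonneg_left hSle (inv_nonneg.2 hATpos.le)
    have hAA : AT⁻¹ * AT = 1 := inv_mul_cancel₀ hATpos.ne'
    nlinarith [this, h1, hεeq, mul_pos (inv_pos.2 hATpos) hATpos]
  · -- claim 3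
    have hQge : AT * Vstar - Regx - Regy ≤ Q := by
      have hPQ : Q = P - Regx := by rw [hRegx']; ring
      have hPS : P = S - Regy := by rw [hRegy']; ring
      nlinarith [hVS]
    have h2 : AT⁻¹ * (AT * Vstar - Regx - Regy) ≤ AT⁻¹ * Q :=
      mul_le_mul_of_nonneg_left hQge (inv_nonneg.2 hATpos.le)
    have hAA : AT⁻¹ * AT = 1 := inv_pos.2 hATpos |>.ne' |> fun _ => inv_mul_cancel₀ hATpos.ne'
    nlinarith [le_trans h2 hJy, hεeq, mul_pos (inv_pos.2 hATpos) hATpos]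
end

section
/- (OptimisticFTRL regret bound) Let η > 0, let R : E → ℝ be β-strongly convex on Z with β ≥ 0, let each loss ℓ_t be μ_t-strongly convex on Z with μ_t ≥ 0, and let each hint m_t : E → ℝ be μ̂_t-strongly convex on Z with μ̂_t ≥ 0. Suppose that for t = 1, …, T the point z_t ∈ Z minimizes z ↦ Σ_{s=1}^{t−1} α_s ℓ_s(z) + α_t m_t(z) + (1/η) R(z) over Z, and that for t = 1, …, T+1 the point w_t ∈ Z minimizes z ↦ Σ_{s=1}^{t−1} α_s ℓ_s(z) + (1/η) R(z) over Z. Then for every z* ∈ Z: Σ_{t=1}^T α_t(ℓ_t(z_t) − ℓ_t(z*)) ≤ Σ_{t=1}^T α_t[(ℓ_t(z_t) − ℓ_t(w_{t+1})) − (m_t(z_t) − m_t(w_{t+1}))] + (1/η)(R(z*) − R(w_1)) − (1/2) Σ_{t=1}^T (β/η + Σ_{s=1}^{t−1} α_s μ_s) ‖z_t − w_t‖² − (1/2) Σ_{t=1}^T (β/η + α_t μ̂_t + Σ_{s=1}^{t−1} α_s μ_s) ‖z_t − w_{t+1}‖². -/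
open scoped BigOperators

open Finset Filter

section Aux

variable {E : Type*} [NormedAddCommGroup E] [InnerProductSpace ℝ E] {Z : Set E}

private lemma sc_min {κ : ℝ} {ψ : E → ℝ} (hψ : StrongConvexOn Z κ ψ)
    {x : E} (hx : x ∈ Z) (hmin : ∀ u ∈ Z, ψ x ≤ ψ u) {u : E} (hu : u ∈ Z) :
    ψ x + κ/2 * ‖u - x‖^2 ≤ ψ u := by
  set c : ℝ := κ/2 * ‖u - x‖^2 with hc
  have h : ∀ θ : ℝ, 0 < θ → θ ≤ 1 → ψ x + (1-θ) * c ≤ ψ u := by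
    intro θ h0 h1
    have hb : (0:ℝ) ≤ 1 - θ := by linarith
    have hpt := hψ.2 hu hx h0.le hb (by ring)
    have hmem : θ • u + (1-θ) • x ∈ Z := hψ.1 hu hx h0.le hb (by ring)
    have h2 : ψ x ≤ θ * ψ u + (1-θ) * ψ x - θ * (1-θ) * c := by
      calc ψ x ≤ ψ (θ • u + (1-θ) • x) := hmin _ hmem
        _ ≤ _ := by simpa [smul_eq_mul, hc] using hpt
    have h4 : θ * (ψ x + (1-θ) * c) ≤ θ * ψ u := by nlinarith [h2]
    have := le_of_mul_le_mul_left h4 h0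
    linarith
  have hseq : ∀ n : ℕ, ψ x + (1 - 1/(n+1)) * c ≤ ψ u := by
    intro n
    refine h _ (by positivity) ?_
    rw [div_le_one (by positivity)]
    linarith [Nat.cast_nonneg (α := ℝ) n]
  have hlim : Tendsto (fun n : ℕ => ψ x + (1 - 1/((n:ℝ)+1)) * c) atTop
      (nhds (ψ x + (1 - 0) * c)) := by
    exact tendsto_const_nhds.add
      (((tendsto_const_nhds.sub tendsto_one_div_add_atTop_nhds_zero_nat)).mul tendsto_const_nhds)
  have := le_of_tendsto' hlim hseq
  linarith

private lemma sc_const_mul {c κ : ℝ} {f : E → ℝ} (hc : 0 ≤ c) (hf : StrongConvexOn Z κ f) :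
    StrongConvexOn Z (c*κ) (fun x => c * f x) := by
  refine ⟨hf.1, fun x hx y hy a b ha hb hab => ?_⟩
  have h := hf.2 hx hy ha hb hab
  simp only [smul_eq_mul] at h ⊢
  calc c * f (a • x + b • y) ≤ c * (a * f x + b * f y - a * b * (κ/2 * ‖x - y‖^2)) :=
        mul_le_mul_of_nonneg_left h hc
    _ = a * (c * f x) + b * (c * f y) - a * b * (c * κ / 2 * ‖x - y‖^2) := by ring

private lemma sc_add {κ κ' : ℝ} {f g : E → ℝ} (hf : StrongConvexOn Z κ f)
    (hg : StrongConvexOn Z κ' g) : StrongConvexOn Z (κ+κ') (fun x => f x + g x) := by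
  refine ⟨hf.1, fun x hx y hy a b ha hb hab => ?_⟩
  have h1 := hf.2 hx hy ha hb hab
  have h2 := hg.2 hx hy ha hb hab
  simp only [smul_eq_mul] at h1 h2 ⊢
  calc f (a • x + b • y) + g (a • x + b • y)
      ≤ (a * f x + b * f y - a * b * (κ/2 * ‖x - y‖^2))
        + (a * g x + b * g y - a * b * (κ'/2 * ‖x - y‖^2)) := add_le_add h1 h2
    _ = a * (f x + g x) + b * (f y + g y) - a * b * ((κ+κ')/2 * ‖x - y‖^2) := by ring

private lemma sc_congr {κ κ' : ℝ} {f : E → ℝ} (hf : StrongConvexOn Z κ f) (h : κ = κ') :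
    StrongConvexOn Z κ' f := h ▸ hf

private lemma sc_sum {ι : Type*} (hZ : Convex ℝ Z) (S : Finset ι) (ν : ι → ℝ) (f : ι → E → ℝ)
    (h : ∀ i ∈ S, StrongConvexOn Z (ν i) (f i)) :
    StrongConvexOn Z (∑ i ∈ S, ν i) (fun x => ∑ i ∈ S, f i x) := by
  classical
  induction S using Finset.induction with
  | empty =>
      refine ⟨hZ, fun x hx y hy a b ha hb hab => ?_⟩
      simp
  | @insert a s hnot ih =>
      simp only [Finset.sum_insert hnot]
      exact sc_add (h a (Finset.mem_insert_self a s))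
        (ih fun i hi => h i (Finset.mem_insert_of_mem hi))

end Aux

/-- Regret bound for OptimisticFTRL. -/
theorem optimisticFTRL_regret_bound
    {E : Type*} [NormedAddCommGroup E] [InnerProductSpace ℝ E]
    (Z : Set E) (hZne : Z.Nonempty) (hZcl : IsClosed Z) (hZconv : Convex ℝ Z)
    (T : ℕ) (hT : 1 ≤ T)
    (α : ℕ → ℝ) (hα : ∀ t ∈ Finset.Icc 1 T, 0 < α t)
    (η : ℝ) (hη : 0 < η)
    (R : E → ℝ) (β : ℝ) (hβ : 0 ≤ β) (hR : StrongConvexOn Z β R)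
    (ℓ : ℕ → E → ℝ) (μ : ℕ → ℝ) (hμ : ∀ t ∈ Finset.Icc 1 T, 0 ≤ μ t)
    (hℓ : ∀ t ∈ Finset.Icc 1 T, StrongConvexOn Z (μ t) (ℓ t))
    (m : ℕ → E → ℝ) (μh : ℕ → ℝ) (hμh : ∀ t ∈ Finset.Icc 1 T, 0 ≤ μh t)
    (hm : ∀ t ∈ Finset.Icc 1 T, StrongConvexOn Z (μh t) (m t))
    (z w : ℕ → E)
    -- `z t` minimizes `Σ_{s<t} α_s ℓ_s + α_t m_t + (1/η) R` over `Z`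
    (hz : ∀ t ∈ Finset.Icc 1 T, z t ∈ Z ∧ ∀ u ∈ Z,
      (∑ s ∈ Finset.Icc 1 (t-1), α s * ℓ s (z t)) + α t * m t (z t) + (1/η) * R (z t)
        ≤ (∑ s ∈ Finset.Icc 1 (t-1), α s * ℓ s u) + α t * m t u + (1/η) * R u)
    -- `w t` minimizes `Σ_{s<t} α_s ℓ_s + (1/η) R` over `Z`
    (hw : ∀ t ∈ Finset.Icc 1 (T+1), w t ∈ Z ∧ ∀ u ∈ Z,
      (∑ s ∈ Finset.Icc 1 (t-1), α s * ℓ s (w t)) + (1/η) * R (w t)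
        ≤ (∑ s ∈ Finset.Icc 1 (t-1), α s * ℓ s u) + (1/η) * R u)
    (zstar : E) (hzstar : zstar ∈ Z) :
    ∑ t ∈ Finset.Icc 1 T, α t * (ℓ t (z t) - ℓ t zstar)
      ≤ (∑ t ∈ Finset.Icc 1 T,
            α t * ((ℓ t (z t) - ℓ t (w (t+1))) - (m t (z t) - m t (w (t+1)))))
        + (1/η) * (R zstar - R (w 1))
        - (1/2) * ∑ t ∈ Finset.Icc 1 T,
            (β/η + ∑ s ∈ Finset.Icc 1 (t-1), α s * μ s) * ‖z t - w t‖^2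
        - (1/2) * ∑ t ∈ Finset.Icc 1 T,
            (β/η + α t * μh t + ∑ s ∈ Finset.Icc 1 (t-1), α s * μ s) * ‖z t - w (t+1)‖^2 := by
  classical
  obtain ⟨F, hFdef⟩ : ∃ F : ℕ → E → ℝ,
      F = fun t x => (∑ s ∈ Finset.Icc 1 (t-1), α s * ℓ s x) + (1/η) * R x := ⟨_, rfl⟩
  obtain ⟨σ, hσdef⟩ : ∃ σ : ℕ → ℝ,
      σ = fun t => β/η + ∑ s ∈ Finset.Icc 1 (t-1), α s * μ s := ⟨_, rfl⟩
  -- strong convexity of F t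
  have hF_sc : ∀ t, t ≤ T + 1 → StrongConvexOn Z (σ t) (F t) := by
    intro t ht
    have hsum : StrongConvexOn Z (∑ s ∈ Finset.Icc 1 (t-1), α s * μ s)
        (fun x => ∑ s ∈ Finset.Icc 1 (t-1), α s * ℓ s x) := by
      refine sc_sum hZconv _ _ _ fun s hs => ?_
      have hs' : s ∈ Finset.Icc 1 T := by
        simp only [Finset.mem_Icc] at hs ⊢; omega
      exact sc_const_mul (hα s hs').le (hℓ s hs')
    have h2 := sc_add hsum (sc_const_mul (by positivity : (0:ℝ) ≤ 1/η) hR)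
    simp only [hFdef]
    exact sc_congr h2 (by rw [hσdef]; ring)
  -- per-step key inequality
  have key : ∀ t ∈ Finset.Icc 1 T,
      α t * (m t (z t) - m t (w (t+1))) + α t * ℓ t (w (t+1))
        + σ t / 2 * ‖z t - w t‖^2 + (σ t + α t * μh t) / 2 * ‖z t - w (t+1)‖^2
        ≤ F (t+1) (w (t+1)) - F t (w t) := by
    intro t ht
    have ht' : t ∈ Finset.Icc 1 (T+1) := by
      simp only [Finset.mem_Icc] at ht ⊢; omega
    have ht1 : 1 ≤ t ∧ t ≤ T := by simpa using ht
    have hwt1 : t + 1 ∈ Finset.Icc 1 (T+1) := by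
      simp only [Finset.mem_Icc]; omega
    -- G t is strongly convex with modulus σ t + α t * μh t
    have hG_sc : StrongConvexOn Z (σ t + α t * μh t) (fun x => F t x + α t * m t x) :=
      sc_add (hF_sc t (by omega)) (sc_const_mul (hα t ht).le (hm t ht))
    -- z t minimizes G t
    have hzmin : ∀ u ∈ Z, F t (z t) + α t * m t (z t) ≤ F t u + α t * m t u := by
      intro u hu
      have := (hz t ht).2 u hu
      simp only [hFdef]
      linarith
    have keyA := sc_min hG_sc (hz t ht).1 hzmin (hw (t+1) hwt1).1
    -- w t minimizes F t
    have hwmin : ∀ u ∈ Z, F t (w t) ≤ F t u := by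
      intro u hu
      simp only [hFdef]
      exact (hw t ht').2 u hu
    have keyB := sc_min (hF_sc t (by omega)) (hw t ht').1 hwmin (hz t ht).1
    -- F (t+1) x = F t x + α t * ℓ t x
    have hstep : F (t+1) (w (t+1)) = F t (w (t+1)) + α t * ℓ t (w (t+1)) := by
      simp only [hFdef]
      rw [show t + 1 - 1 = (t-1) + 1 from by omega,
        Finset.sum_Icc_succ_top (by omega : 1 ≤ (t-1) + 1),
        show t - 1 + 1 = t from by omega]
      ring
    rw [norm_sub_rev (w (t+1)) (z t)] at keyA
    rw [norm_sub_rev (z t) (w t)] at keyB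
    rw [norm_sub_rev (w t) (z t)] at keyB
    have hexp : α t * (m t (z t) - m t (w (t+1)))
        = α t * m t (z t) - α t * m t (w (t+1)) := by ring
    linarith [keyA, keyB, hexp]
  -- sum the key inequalities and telescope
  have hsumkey := Finset.sum_le_sum key
  have htel : ∑ t ∈ Finset.Icc 1 T, (F (t+1) (w (t+1)) - F t (w t))
      = F (T+1) (w (T+1)) - F 1 (w 1) := by
    have h1 : ∑ t ∈ Finset.Icc 1 T, (F (t+1) (w (t+1)) - F t (w t))
        = ∑ i ∈ Finset.range T,
            ((fun j => F (j+1) (w (j+1))) (i+1) - (fun j => F (j+1) (w (j+1))) i) := by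
      rw [← Finset.Ico_add_one_right_eq_Icc, Finset.sum_Ico_eq_sum_range]
      refine Finset.sum_congr (by simp) fun i _ => ?_
      simp only []
      rw [show 1 + i = i + 1 from by omega]
    rw [h1, Finset.sum_range_sub (fun j => F (j+1) (w (j+1))) T]
  -- bounds at the endpoints
  have hfin1 : F (T+1) (w (T+1)) ≤ (∑ t ∈ Finset.Icc 1 T, α t * ℓ t zstar) + (1/η) * R zstar := by
    have := (hw (T+1) (by simp)).2 zstar hzstar
    simpa [hFdef] using this
  have hfin2 : F 1 (w 1) = (1/η) * R (w 1) := by simp [hFdef]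
  -- split sums
  have hs0 : ∑ t ∈ Finset.Icc 1 T,
      (α t * (m t (z t) - m t (w (t+1))) + α t * ℓ t (w (t+1))
        + σ t / 2 * ‖z t - w t‖^2 + (σ t + α t * μh t) / 2 * ‖z t - w (t+1)‖^2)
      = (∑ t ∈ Finset.Icc 1 T, α t * (m t (z t) - m t (w (t+1))))
        + (∑ t ∈ Finset.Icc 1 T, α t * ℓ t (w (t+1)))
        + (∑ t ∈ Finset.Icc 1 T, σ t / 2 * ‖z t - w t‖^2)
        + (∑ t ∈ Finset.Icc 1 T, (σ t + α t * μh t) / 2 * ‖z t - w (t+1)‖^2) := by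
    simp [Finset.sum_add_distrib]
  have hs1 : (∑ t ∈ Finset.Icc 1 T, α t * (ℓ t (z t) - ℓ t zstar))
      = (∑ t ∈ Finset.Icc 1 T, α t * ℓ t (z t)) - ∑ t ∈ Finset.Icc 1 T, α t * ℓ t zstar := by
    rw [← Finset.sum_sub_distrib]
    exact Finset.sum_congr rfl fun t _ => by ring
  have hs2 : (∑ t ∈ Finset.Icc 1 T,
        α t * ((ℓ t (z t) - ℓ t (w (t+1))) - (m t (z t) - m t (w (t+1)))))
      = (∑ t ∈ Finset.Icc 1 T, α t * ℓ t (z t))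
        - (∑ t ∈ Finset.Icc 1 T, α t * ℓ t (w (t+1)))
        - (∑ t ∈ Finset.Icc 1 T, α t * (m t (z t) - m t (w (t+1)))) := by
    rw [← Finset.sum_sub_distrib, ← Finset.sum_sub_distrib]
    exact Finset.sum_congr rfl fun t _ => by ring
  have hs3 : (1/2) * ∑ t ∈ Finset.Icc 1 T,
        (β/η + ∑ s ∈ Finset.Icc 1 (t-1), α s * μ s) * ‖z t - w t‖^2
      = ∑ t ∈ Finset.Icc 1 T, σ t / 2 * ‖z t - w t‖^2 := by
    rw [Finset.mul_sum]
    exact Finset.sum_congr rfl fun t _ => by rw [hσdef]; ring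
  have hs4 : (1/2) * ∑ t ∈ Finset.Icc 1 T,
        (β/η + α t * μh t + ∑ s ∈ Finset.Icc 1 (t-1), α s * μ s) * ‖z t - w (t+1)‖^2
      = ∑ t ∈ Finset.Icc 1 T, (σ t + α t * μh t) / 2 * ‖z t - w (t+1)‖^2 := by
    rw [Finset.mul_sum]
    exact Finset.sum_congr rfl fun t _ => by rw [hσdef]; ring
  rw [hs1, hs2, hs3, hs4]
  rw [hs0, htel] at hsumkey
  linarith
end

section
/- (Follow-The-Leader regret bound for strongly convex losses) Let μ > 0 and suppose each loss ℓ_t : E → ℝ is μ-strongly convex on Z and differentiable with gradient ∇ℓ_t. Suppose z_1 ∈ Z is an arbitrary initial point and, for t = 2, …, T, the point z_t ∈ Z minimizes z ↦ Σ_{s=1}^{t−1} α_s ℓ_s(z) over Z. Then for every z* ∈ Z: Σ_{t=1}^T α_t(ℓ_t(z_t) − ℓ_t(z*)) ≤ Σ_{t=1}^T (2 α_t² / (μ Σ_{s=1}^t α_s)) ‖∇ℓ_t(z_t)‖². -/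
/-!
Write `F_n = ∑_{s ≤ n} α_s ℓ_s` and `A_n = ∑_{s ≤ n} α_s`. The regret against `u` after `n + 1`
rounds is the regret after `n` rounds against the next leader `z_{n+1}`, plus
`F_n(z_{n+1}) - F_n(u)`, plus `α_{n+1} (ℓ_{n+1}(z_{n+1}) - ℓ_{n+1}(u))`. Since `F_n` is
`μ A_n`-strongly convex and minimized over `Z` at `z_{n+1}`, the middle term is at most
`-μ A_n r² / 2` with `r = ‖u - z_{n+1}‖`; the tangent inequality of the strongly convex
`ℓ_{n+1}` and Cauchy–Schwarz bound the last term by `α_{n+1} (‖∇ℓ_{n+1}(z_{n+1})‖ r - μ r² / 2)`.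
Maximizing over `r` leaves `α_{n+1}² ‖∇ℓ_{n+1}(z_{n+1})‖² / (2 μ A_{n+1})` per round, a quarter
of the stated bound, and induction on the number of rounds concludes.
-/

section
variable {E : Type*} [NormedAddCommGroup E] [NormedSpace ℝ E] {s : Set E} {f : E → ℝ}
  {f' : E →L[ℝ] ℝ} {x y : E}

theorem ConvexOn.add_fderiv_le (hf : ConvexOn ℝ s f) (hd : HasFDerivAt f f' x)
    (hx : x ∈ s) (hy : y ∈ s) : f x + f' (y - x) ≤ f y := by
  have hline : ConvexOn ℝ (Set.Icc (0 : ℝ) 1) (f ∘ AffineMap.lineMap x y) :=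
    (hf.comp_affineMap _).subset (fun _ ht => hf.1.lineMap_mem hx hy ht) (convex_Icc 0 1)
  have hderiv : HasDerivAt (f ∘ AffineMap.lineMap x y) (f' (y - x)) (0 : ℝ) := by
    rw [← AffineMap.lineMap_apply_zero x y (k := ℝ)] at hd
    exact hd.comp_hasDerivAt 0 AffineMap.hasDerivAt_lineMap
  have := hline.le_slope_of_hasDerivAt (by simp) (by simp) zero_lt_one hderiv
  simp only [slope_def_field, Function.comp_apply, AffineMap.lineMap_apply_one,
    AffineMap.lineMap_apply_zero, sub_zero, div_one] at this
  linarith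

theorem convexOn_sum {ι : Type*} {t : Finset ι} {g : ι → E → ℝ} (hs : Convex ℝ s)
    (hg : ∀ i ∈ t, ConvexOn ℝ s (g i)) : ConvexOn ℝ s (fun x => ∑ i ∈ t, g i x) := by
  simpa only [← Finset.sum_apply] using
    Finset.sum_induction g (ConvexOn ℝ s) (fun _ _ => ConvexOn.add) (convexOn_const 0 hs) hg
end

section
variable {E : Type*} [NormedAddCommGroup E] [InnerProductSpace ℝ E] {s : Set E} {f : E → ℝ}
  {f' : E →L[ℝ] ℝ} {m : ℝ} {x y : E}

theorem StrongConvexOn.add_fderiv_add_sq_le (hf : StrongConvexOn s m f) (hd : HasFDerivAt f f' x)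
    (hx : x ∈ s) (hy : y ∈ s) : f x + f' (y - x) + m / 2 * ‖y - x‖ ^ 2 ≤ f y := by
  have hconv := (strongConvexOn_iff_convex.1 hf).add_fderiv_le
    (hd.sub ((hasStrictFDerivAt_norm_sq x).hasFDerivAt.const_mul (m / 2))) hx hy
  simp only [sub_apply, smul_apply, coe_innerSL_apply, nsmul_eq_mul, Nat.cast_ofNat,
    smul_eq_mul] at hconv
  have hexpand := norm_add_sq_real x (y - x)
  rw [add_sub_cancel] at hexpand
  rw [hexpand] at hconv
  linarith

theorem StrongConvexOn.add_sq_le_of_isMinOn (hf : StrongConvexOn s m f) (hd : HasFDerivAt f f' x)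
    (hmin : IsMinOn f s x) (hx : x ∈ s) (hy : y ∈ s) : f x + m / 2 * ‖y - x‖ ^ 2 ≤ f y := by
  have := hmin.localize.hasFDerivWithinAt_nonneg hd.hasFDerivWithinAt
    (sub_mem_posTangentConeAt_of_segment_subset (hf.1.segment_subset hx hy))
  linarith [hf.add_fderiv_add_sq_le hd hx hy]

theorem strongConvexOn_sum_mul {ι : Type*} {t : Finset ι} {w : ι → ℝ} {g : ι → E → ℝ}
    (hs : Convex ℝ s) (hw : ∀ i ∈ t, 0 ≤ w i) (hg : ∀ i ∈ t, StrongConvexOn s m (g i)) :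
    StrongConvexOn s (m * ∑ i ∈ t, w i) (fun x => ∑ i ∈ t, w i * g i x) := by
  rw [strongConvexOn_iff_convex]
  have hsplit : (fun x => ∑ i ∈ t, w i * g i x - m * (∑ i ∈ t, w i) / 2 * ‖x‖ ^ 2)
      = fun x => ∑ i ∈ t, w i * (g i x - m / 2 * ‖x‖ ^ 2) := by
    funext x
    have hquad : (m * ∑ i ∈ t, w i) / 2 * ‖x‖ ^ 2 = ∑ i ∈ t, w i * (m / 2 * ‖x‖ ^ 2) := by
      rw [Finset.mul_sum, Finset.sum_div, Finset.sum_mul]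
      exact Finset.sum_congr rfl fun _ _ => by ring
    simp only [hquad, mul_sub, Finset.sum_sub_distrib]
  rw [hsplit]
  exact convexOn_sum hs fun i hi => (strongConvexOn_iff_convex.1 (hg i hi)).smul (hw i hi)
end

theorem mul_sub_half_mul_sq_le {b : ℝ} (hb : 0 < b) (c r : ℝ) :
    c * r - b / 2 * r ^ 2 ≤ c ^ 2 / (2 * b) := by
  rw [le_div_iff₀ (by positivity)]
  nlinarith [sq_nonneg (c - b * r)]

section
variable {E : Type*} [NormedAddCommGroup E] [InnerProductSpace ℝ E] {s : Set E}

theorem sub_add_mul_sub_le_of_isMinOn {F ℓ : E → ℝ} {F' : E →L[ℝ] ℝ} {g w u : E} {μ A a : ℝ}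
    (hμ : 0 < μ) (hA : 0 ≤ A) (ha : 0 < a)
    (hF : StrongConvexOn s (μ * A) F) (hFd : HasFDerivAt F F' w) (hmin : IsMinOn F s w)
    (hℓ : StrongConvexOn s μ ℓ) (hℓd : HasFDerivAt ℓ (innerSL ℝ g) w) (hw : w ∈ s) (hu : u ∈ s) :
    F w - F u + a * (ℓ w - ℓ u) ≤ a ^ 2 / (2 * (μ * (A + a))) * ‖g‖ ^ 2 := by
  have hgrowth := hF.add_sq_le_of_isMinOn hFd hmin hw hu
  have htangent := hℓ.add_fderiv_add_sq_le hℓd hw hu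
  have hcs : -(‖g‖ * ‖u - w‖) ≤ innerSL ℝ g (u - w) :=
    neg_le_of_abs_le (abs_real_inner_le_norm g (u - w))
  calc F w - F u + a * (ℓ w - ℓ u)
      ≤ a * ‖g‖ * ‖u - w‖ - μ * (A + a) / 2 * ‖u - w‖ ^ 2 := by nlinarith
    _ ≤ (a * ‖g‖) ^ 2 / (2 * (μ * (A + a))) := mul_sub_half_mul_sq_le (by positivity) _ _
    _ = a ^ 2 / (2 * (μ * (A + a))) * ‖g‖ ^ 2 := by ring
end

section
variable {E : Type*}

def cumulativeLoss (α : ℕ → ℝ) (ℓ : ℕ → E → ℝ) (n : ℕ) (u : E) : ℝ :=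
  ∑ s ∈ Finset.Icc 1 n, α s * ℓ s u

def regret (α : ℕ → ℝ) (ℓ : ℕ → E → ℝ) (z : ℕ → E) (n : ℕ) (u : E) : ℝ :=
  ∑ t ∈ Finset.Icc 1 n, α t * (ℓ t (z t) - ℓ t u)

theorem regret_succ (α : ℕ → ℝ) (ℓ : ℕ → E → ℝ) (z : ℕ → E) (n : ℕ) (u w : E) :
    regret α ℓ z (n + 1) u = regret α ℓ z n w
      + (cumulativeLoss α ℓ n w - cumulativeLoss α ℓ n u)
      + α (n + 1) * (ℓ (n + 1) (z (n + 1)) - ℓ (n + 1) u) := by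
  simp only [regret, cumulativeLoss, Finset.sum_Icc_succ_top (Nat.le_add_left 1 n),
    add_left_inj, ← Finset.sum_sub_distrib, ← Finset.sum_add_distrib]
  exact Finset.sum_congr rfl fun t _ => by ring

variable [NormedAddCommGroup E] [InnerProductSpace ℝ E]

theorem hasFDerivAt_cumulativeLoss {α : ℕ → ℝ} {ℓ : ℕ → E → ℝ} {g : ℕ → E → E} {n : ℕ} {x : E}
    (hd : ∀ t ∈ Finset.Icc 1 n, HasFDerivAt (ℓ t) (innerSL ℝ (g t x)) x) :
    HasFDerivAt (cumulativeLoss α ℓ n) (∑ t ∈ Finset.Icc 1 n, α t • innerSL ℝ (g t x)) x :=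
  HasFDerivAt.fun_sum fun t ht => (hd t ht).const_smul (α t)

theorem regret_le_of_isMinOn_cumulativeLoss {Z : Set E} (hZ : Convex ℝ Z) {T : ℕ} {α : ℕ → ℝ}
    (hα : ∀ t ∈ Finset.Icc 1 T, 0 < α t) {μ : ℝ} (hμ : 0 < μ) {ℓ : ℕ → E → ℝ} {g : ℕ → E → E}
    (hℓ : ∀ t ∈ Finset.Icc 1 T, StrongConvexOn Z μ (ℓ t))
    (hℓd : ∀ t ∈ Finset.Icc 1 T, ∀ x, HasFDerivAt (ℓ t) (innerSL ℝ (g t x)) x) {z : ℕ → E}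
    (hleader : ∀ n < T, z (n + 1) ∈ Z ∧ IsMinOn (cumulativeLoss α ℓ n) Z (z (n + 1)))
    {u : E} (hu : u ∈ Z) :
    regret α ℓ z T u ≤
      ∑ t ∈ Finset.Icc 1 T, α t ^ 2 / (2 * (μ * ∑ s ∈ Finset.Icc 1 t, α s)) * ‖g t (z t)‖ ^ 2 := by
  suffices ∀ n ≤ T, ∀ u ∈ Z, regret α ℓ z n u ≤
      ∑ t ∈ Finset.Icc 1 n, α t ^ 2 / (2 * (μ * ∑ s ∈ Finset.Icc 1 t, α s)) * ‖g t (z t)‖ ^ 2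
    from this T le_rfl u hu
  intro n
  induction n with
  | zero => simp [regret]
  | succ n ih =>
    intro hn u hu
    have hsub : Finset.Icc 1 n ⊆ Finset.Icc 1 T := Finset.Icc_subset_Icc_right (by omega)
    have hlast : n + 1 ∈ Finset.Icc 1 T := Finset.mem_Icc.2 ⟨by omega, hn⟩
    obtain ⟨hzZ, hmin⟩ := hleader n hn
    have hround := sub_add_mul_sub_le_of_isMinOn (F := cumulativeLoss α ℓ n) hμ
      (Finset.sum_nonneg fun t ht => (hα t (hsub ht)).le) (hα _ hlast)
      (strongConvexOn_sum_mul hZ (fun t ht => (hα t (hsub ht)).le) fun t ht => hℓ t (hsub ht))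
      (hasFDerivAt_cumulativeLoss fun t ht => hℓd t (hsub ht) _) hmin
      (hℓ _ hlast) (hℓd _ hlast _) hzZ hu
    rw [regret_succ α ℓ z n u (z (n + 1)), Finset.sum_Icc_succ_top (by omega),
      Finset.sum_Icc_succ_top (by omega : 1 ≤ n + 1) α]
    linarith [ih (by omega) _ hzZ]
end

theorem ftl_regret_bound_general
    {E : Type*} [NormedAddCommGroup E] [InnerProductSpace ℝ E]
    (Z : Set E) (hZconv : Convex ℝ Z)
    (T : ℕ)
    (α : ℕ → ℝ) (hα : ∀ t ∈ Finset.Icc 1 T, 0 < α t)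
    (μ : ℝ) (hμ : 0 < μ)
    (ℓ : ℕ → E → ℝ) (gℓ : ℕ → E → E)
    (hℓsc : ∀ t ∈ Finset.Icc 1 T, StrongConvexOn Z μ (ℓ t))
    -- each `ℓ t` is differentiable with gradient `gℓ t`
    (hℓdiff : ∀ t ∈ Finset.Icc 1 T, ∀ x : E, HasFDerivAt (ℓ t) (innerSL ℝ (gℓ t x)) x)
    (z : ℕ → E) (hz1 : z 1 ∈ Z)
    -- for `t = 2, …, T`, `z t` minimizes `Σ_{s<t} α_s ℓ_s` over `Z`
    (hz : ∀ t ∈ Finset.Icc 2 T, z t ∈ Z ∧ ∀ u ∈ Z,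
      (∑ s ∈ Finset.Icc 1 (t-1), α s * ℓ s (z t)) ≤ ∑ s ∈ Finset.Icc 1 (t-1), α s * ℓ s u)
    (zstar : E) (hzstar : zstar ∈ Z) :
    ∑ t ∈ Finset.Icc 1 T, α t * (ℓ t (z t) - ℓ t zstar)
      ≤ ∑ t ∈ Finset.Icc 1 T,
          (2 * (α t)^2 / (μ * ∑ s ∈ Finset.Icc 1 t, α s)) * ‖gℓ t (z t)‖^2 := by
  have hleader : ∀ n < T, z (n + 1) ∈ Z ∧ IsMinOn (cumulativeLoss α ℓ n) Z (z (n + 1)) := by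
    rintro (_ | n) hn
    · exact ⟨hz1, isMinOn_iff.2 fun u _ => by simp [cumulativeLoss]⟩
    · obtain ⟨hzZ, hmin⟩ := hz (n + 2) (Finset.mem_Icc.2 ⟨by omega, hn⟩)
      exact ⟨hzZ, isMinOn_iff.2 hmin⟩
  refine (regret_le_of_isMinOn_cumulativeLoss hZconv hα hμ hℓsc hℓdiff hleader hzstar).trans
    (Finset.sum_le_sum fun t ht => ?_)
  have hA : 0 < μ * ∑ s ∈ Finset.Icc 1 t, α s := mul_pos hμ <| Finset.sum_pos
    (fun s hs => hα s (Finset.Icc_subset_Icc_right (Finset.mem_Icc.1 ht).2 hs))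
    (Finset.nonempty_Icc.2 (Finset.mem_Icc.1 ht).1)
  gcongr ?_ * _
  rw [div_le_div_iff₀ (by positivity) hA]
  nlinarith [sq_nonneg (α t)]

/-- Follow-The-Leader regret bound for strongly convex losses. -/
theorem ftl_regret_bound
    {E : Type*} [NormedAddCommGroup E] [InnerProductSpace ℝ E]
    (Z : Set E) (hZne : Z.Nonempty) (hZcl : IsClosed Z) (hZconv : Convex ℝ Z)
    (T : ℕ) (hT : 1 ≤ T)
    (α : ℕ → ℝ) (hα : ∀ t ∈ Finset.Icc 1 T, 0 < α t)
    (μ : ℝ) (hμ : 0 < μ)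
    (ℓ : ℕ → E → ℝ) (gℓ : ℕ → E → E)
    (hℓsc : ∀ t ∈ Finset.Icc 1 T, StrongConvexOn Z μ (ℓ t))
    -- each `ℓ t` is differentiable with gradient `gℓ t`
    (hℓdiff : ∀ t ∈ Finset.Icc 1 T, ∀ x : E, HasFDerivAt (ℓ t) (innerSL ℝ (gℓ t x)) x)
    (z : ℕ → E) (hz1 : z 1 ∈ Z)
    -- for `t = 2, …, T`, `z t` minimizes `Σ_{s<t} α_s ℓ_s` over `Z`
    (hz : ∀ t ∈ Finset.Icc 2 T, z t ∈ Z ∧ ∀ u ∈ Z,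
      (∑ s ∈ Finset.Icc 1 (t-1), α s * ℓ s (z t)) ≤ ∑ s ∈ Finset.Icc 1 (t-1), α s * ℓ s u)
    (zstar : E) (hzstar : zstar ∈ Z) :
    ∑ t ∈ Finset.Icc 1 T, α t * (ℓ t (z t) - ℓ t zstar)
      ≤ ∑ t ∈ Finset.Icc 1 T,
          (2 * (α t)^2 / (μ * ∑ s ∈ Finset.Icc 1 t, α s)) * ‖gℓ t (z t)‖^2 :=
  ftl_regret_bound_general Z hZconv T α hα μ hμ ℓ gℓ hℓsc hℓdiff z hz1 hz zstar hzstar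
end

section
/- (FTL⁺ / Be-The-Leader regret bound) Let μ ≥ 0 and suppose each loss ℓ_t : E → ℝ is μ-strongly convex on Z. Suppose that for t = 1, …, T the point z_t ∈ Z minimizes z ↦ Σ_{s=1}^{t} α_s ℓ_s(z) over Z. Then for every z* ∈ Z: Σ_{t=1}^T α_t(ℓ_t(z_t) − ℓ_t(z*)) ≤ − Σ_{t=2}^T (μ A_{t−1}/2) ‖z_{t−1} − z_t‖² ≤ 0, where A_{t−1} := Σ_{s=1}^{t−1} α_s. -/
open scoped BigOperators
open Filter Topology

lemma my_smul_strongConvexOn {E : Type*} [NormedAddCommGroup E] [InnerProductSpace ℝ E]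
    {Z : Set E} {μ : ℝ} {f : E → ℝ} (hf : StrongConvexOn Z μ f) {c : ℝ} (hc : 0 ≤ c) :
    StrongConvexOn Z (c * μ) (fun u => c * f u) := by
  refine ⟨hf.1, fun x hx y hy a b ha hb hab => ?_⟩
  have h2 := mul_le_mul_of_nonneg_left (hf.2 hx hy ha hb hab) hc
  simp only [smul_eq_mul] at *
  refine h2.trans (le_of_eq ?_)
  ring

lemma my_sum_strongConvexOn {E : Type*} [NormedAddCommGroup E] [InnerProductSpace ℝ E]
    {Z : Set E} (hZ : Convex ℝ Z) (s : Finset ℕ) (m : ℕ → ℝ) (f : ℕ → E → ℝ)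
    (h : ∀ i ∈ s, StrongConvexOn Z (m i) (f i)) :
    StrongConvexOn Z (∑ i ∈ s, m i) (fun u => ∑ i ∈ s, f i u) := by
  induction s using Finset.cons_induction with
  | empty => simpa using (convexOn_const (0:ℝ) hZ)
  | cons i s hi ih =>
    have h1 := h i (Finset.mem_cons_self i s)
    have h2 := ih (fun j hj => h j (Finset.mem_cons_of_mem hj))
    have h3 := h1.add h2
    refine ⟨h3.1, fun x hx y hy a b ha hb hab => ?_⟩
    have := h3.2 hx hy ha hb hab
    simp only [Pi.add_apply, Finset.sum_cons, smul_eq_mul] at *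
    refine this.trans (le_of_eq ?_)
    ring

lemma my_strong_min {E : Type*} [NormedAddCommGroup E] [InnerProductSpace ℝ E]
    {Z : Set E} {m : ℝ} {F : E → ℝ} (hF : StrongConvexOn Z m F) {x y : E}
    (hx : x ∈ Z) (hy : y ∈ Z) (hmin : ∀ u ∈ Z, F x ≤ F u) :
    F x + m / 2 * ‖x - y‖ ^ 2 ≤ F y := by
  set c : ℝ := m / 2 * ‖x - y‖ ^ 2 with hc
  have key : ∀ θ : ℝ, θ ∈ Set.Ioo (0:ℝ) 1 → (1 - θ) * c ≤ F y - F x := by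
    intro θ hθ
    have hb : (0:ℝ) ≤ 1 - θ := by linarith [hθ.2]
    have hab : θ + (1 - θ) = 1 := by ring
    have h1 := hF.2 hy hx hθ.1.le hb hab
    have h2 := hmin _ (hF.1 hy hx hθ.1.le hb hab)
    simp only [smul_eq_mul] at h1 h2
    have hn : ‖y - x‖ = ‖x - y‖ := norm_sub_rev _ _
    rw [hn] at h1
    have h3 : θ * ((1 - θ) * c) ≤ θ * (F y - F x) := by rw [hc]; nlinarith
    exact le_of_mul_le_mul_left h3 hθ.1
  have hev : ∀ᶠ θ in 𝓝[>] (0:ℝ), (1 - θ) * c ≤ F y - F x := by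
    filter_upwards [Ioo_mem_nhdsGT_of_mem (Set.mem_Ico.mpr ⟨le_refl (0:ℝ), one_pos⟩)] with θ hθ
    exact key θ hθ
  have htend : Tendsto (fun θ : ℝ => (1 - θ) * c) (𝓝[>] (0:ℝ)) (𝓝 c) := by
    have : Tendsto (fun θ : ℝ => (1 - θ) * c) (𝓝 (0:ℝ)) (𝓝 ((1 - 0) * c)) := by
      exact (continuous_const.sub continuous_id).mul continuous_const |>.tendsto 0
    simpa using this.mono_left nhdsWithin_le_nhds
  have := le_of_tendsto htend hev
  linarith

/-- FTL⁺ (Be-The-Leader) regret bound. -/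
theorem btl_regret_bound
    {E : Type*} [NormedAddCommGroup E] [InnerProductSpace ℝ E]
    (Z : Set E) (hZne : Z.Nonempty) (hZcl : IsClosed Z) (hZconv : Convex ℝ Z)
    (T : ℕ) (hT : 1 ≤ T)
    (α : ℕ → ℝ) (hα : ∀ t ∈ Finset.Icc 1 T, 0 < α t)
    (μ : ℝ) (hμ : 0 ≤ μ)
    (ℓ : ℕ → E → ℝ)
    (hℓsc : ∀ t ∈ Finset.Icc 1 T, StrongConvexOn Z μ (ℓ t))
    (z : ℕ → E)
    -- for `t = 1, …, T`, `z t` minimizes `Σ_{s≤t} α_s ℓ_s` over `Z`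
    (hz : ∀ t ∈ Finset.Icc 1 T, z t ∈ Z ∧ ∀ u ∈ Z,
      (∑ s ∈ Finset.Icc 1 t, α s * ℓ s (z t)) ≤ ∑ s ∈ Finset.Icc 1 t, α s * ℓ s u)
    (zstar : E) (hzstar : zstar ∈ Z) :
    (∑ t ∈ Finset.Icc 1 T, α t * (ℓ t (z t) - ℓ t zstar)
      ≤ - ∑ t ∈ Finset.Icc 2 T,
          (μ * (∑ s ∈ Finset.Icc 1 (t-1), α s) / 2) * ‖z (t-1) - z t‖^2) ∧
    (- ∑ t ∈ Finset.Icc 2 T,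
        (μ * (∑ s ∈ Finset.Icc 1 (t-1), α s) / 2) * ‖z (t-1) - z t‖^2 ≤ 0) := by
  have hFsc : ∀ t, t ≤ T →
      StrongConvexOn Z (μ * ∑ s ∈ Finset.Icc 1 t, α s)
        (fun u => ∑ s ∈ Finset.Icc 1 t, α s * ℓ s u) := by
    intro t ht
    have key := my_sum_strongConvexOn hZconv (Finset.Icc 1 t) (fun s => α s * μ)
      (fun s u => α s * ℓ s u) (fun s hs => by
        have hs' : s ∈ Finset.Icc 1 T := by
          simp only [Finset.mem_Icc] at hs ⊢; omega
        exact my_smul_strongConvexOn (hℓsc s hs') (hα s hs').le)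
    have e : μ * ∑ s ∈ Finset.Icc 1 t, α s = ∑ s ∈ Finset.Icc 1 t, α s * μ := by
      rw [mul_comm, Finset.sum_mul]
    rw [e]
    exact key
  have claim : ∀ t, 1 ≤ t → t ≤ T →
      (∑ s ∈ Finset.Icc 1 t, α s * ℓ s (z s))
        + ∑ s ∈ Finset.Icc 2 t,
            (μ * (∑ r ∈ Finset.Icc 1 (s-1), α r) / 2) * ‖z (s-1) - z s‖^2
      ≤ ∑ s ∈ Finset.Icc 1 t, α s * ℓ s (z t) := by
    intro t h1 h2
    induction t, h1 using Nat.le_induction with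
    | base => simp
    | succ t ht ih =>
      have htT : t ≤ T := by omega
      have ih' := ih htT
      rw [Finset.sum_Icc_succ_top (by omega : 1 ≤ t+1),
          Finset.sum_Icc_succ_top (by omega : 2 ≤ t+1),
          Finset.sum_Icc_succ_top (by omega : 1 ≤ t+1)]
      have hmin := hz t (Finset.mem_Icc.mpr ⟨ht, htT⟩)
      have hz1 := (hz (t+1) (Finset.mem_Icc.mpr ⟨by omega, h2⟩)).1
      have hgrow := my_strong_min (hFsc t htT) hmin.1 hz1 hmin.2
      simp only [Nat.add_sub_cancel]
      linarith
  have hT1 := claim T hT le_rfl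
  have hminT := hz T (Finset.mem_Icc.mpr ⟨hT, le_rfl⟩)
  have h2 := hminT.2 zstar hzstar
  constructor
  · have e : ∑ t ∈ Finset.Icc 1 T, α t * (ℓ t (z t) - ℓ t zstar)
        = (∑ t ∈ Finset.Icc 1 T, α t * ℓ t (z t))
          - ∑ t ∈ Finset.Icc 1 T, α t * ℓ t zstar := by
      rw [← Finset.sum_sub_distrib]
      exact Finset.sum_congr rfl (fun t _ => by ring)
    rw [e]
    linarith
  · have hnn : 0 ≤ ∑ t ∈ Finset.Icc 2 T,
        (μ * (∑ s ∈ Finset.Icc 1 (t-1), α s) / 2) * ‖z (t-1) - z t‖^2 := by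
      refine Finset.sum_nonneg (fun t htm => ?_)
      have hA : 0 ≤ ∑ r ∈ Finset.Icc 1 (t-1), α r := by
        refine Finset.sum_nonneg (fun r hr => ?_)
        refine (hα r (Finset.mem_Icc.mpr ?_)).le
        simp only [Finset.mem_Icc] at hr htm; omega
      exact mul_nonneg (div_nonneg (mul_nonneg hμ hA) (by norm_num))
        (pow_nonneg (norm_nonneg _) 2)
    linarith
end

section
/- (FTRL⁺ / Be-The-Regularized-Leader regret bound) Let η > 0, let R : E → ℝ be β-strongly convex on Z with β ≥ 0, let μ ≥ 0, and suppose each loss ℓ_t is μ-strongly convex on Z. Suppose z_0 ∈ Z minimizes R over Z and, for t = 1, …, T, the point z_t ∈ Z minimizes z ↦ Σ_{s=1}^{t} α_s ℓ_s(z) + (1/η) R(z) over Z. Then for every z* ∈ Z: Σ_{t=1}^T α_t(ℓ_t(z_t) − ℓ_t(z*)) ≤ (R(z*) − R(z_0))/η − Σ_{t=1}^T (μ A_{t−1}/2 + β/(2η)) ‖z_{t−1} − z_t‖², where A_{t−1} := Σ_{s=1}^{t−1} α_s (so A_0 = 0). -/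
open scoped BigOperators


section Aux
variable {E : Type*} [NormedAddCommGroup E] [InnerProductSpace ℝ E]

lemma strongConvexOn_add' {Z : Set E} {m n : ℝ} {f g : E → ℝ}
    (hf : StrongConvexOn Z m f) (hg : StrongConvexOn Z n g) :
    StrongConvexOn Z (m + n) (fun x => f x + g x) := by
  refine ⟨hf.1, fun x hx y hy a b ha hb hab => ?_⟩
  have h1 := hf.2 hx hy ha hb hab
  have h2 := hg.2 hx hy ha hb hab
  simp only [smul_eq_mul] at *
  nlinarith [h1, h2]

lemma strongConvexOn_smul' {Z : Set E} {m c : ℝ} {f : E → ℝ} (hc : 0 ≤ c)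
    (hf : StrongConvexOn Z m f) :
    StrongConvexOn Z (c * m) (fun x => c * f x) := by
  refine ⟨hf.1, fun x hx y hy a b ha hb hab => ?_⟩
  have h1 := hf.2 hx hy ha hb hab
  simp only [smul_eq_mul] at *
  nlinarith [mul_le_mul_of_nonneg_left h1 hc]

lemma strong_min {Z : Set E} {σ : ℝ} {f : E → ℝ}
    (hf : StrongConvexOn Z σ f) {x : E} (hx : x ∈ Z)
    (hmin : ∀ u ∈ Z, f x ≤ f u) {u : E} (hu : u ∈ Z) :
    f x + σ / 2 * ‖x - u‖ ^ 2 ≤ f u := by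
  set d : ℝ := σ / 2 * ‖x - u‖ ^ 2 with hd
  have hd0 : 0 ≤ d ∨ d < 0 := le_or_gt 0 d
  rcases hd0 with hd0 | hd0
  · have key : ∀ ε > (0:ℝ), f x + d ≤ f u + ε := by
      intro ε hε
      set θ : ℝ := ε / (d + ε) with hθ
      have hden : 0 < d + ε := by linarith
      have hθpos : 0 < θ := div_pos hε hden
      have hθle : θ ≤ 1 := by
        rw [hθ, div_le_one hden]; linarith
      have hcvx := hf.2 hu hx (le_of_lt hθpos) (by linarith : (0:ℝ) ≤ 1 - θ)
        (by ring)
      have hmem : θ • u + (1 - θ) • x ∈ Z :=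
        hf.1 hu hx (le_of_lt hθpos) (by linarith) (by ring)
      have hlow := hmin _ hmem
      simp only [smul_eq_mul] at hcvx
      have hdu : ‖u - x‖ ^ 2 = ‖x - u‖ ^ 2 := by rw [norm_sub_rev]
      rw [hdu] at hcvx
      -- f x ≤ θ f u + (1-θ) f x - θ(1-θ) d'
      have h3 : θ * f x ≤ θ * f u - θ * (1 - θ) * (σ / 2 * ‖x - u‖ ^ 2) := by
        nlinarith [hlow, hcvx]
      have h4 : f x ≤ f u - (1 - θ) * d := by
        rw [hd]
        nlinarith [h3, hθpos]
      have hθd : θ * d ≤ ε := by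
        rw [hθ, div_mul_eq_mul_div, div_le_iff₀ hden]
        nlinarith
      nlinarith [h4, hθd]
    linarith [le_of_forall_pos_le_add key]
  · have := hmin u hu
    linarith

end Aux




/-- FTRL⁺ (Be-The-Regularized-Leader) regret bound. -/
theorem btrl_regret_bound
    {E : Type*} [NormedAddCommGroup E] [InnerProductSpace ℝ E]
    (Z : Set E) (hZne : Z.Nonempty) (hZcl : IsClosed Z) (hZconv : Convex ℝ Z)
    (T : ℕ) (hT : 1 ≤ T)
    (α : ℕ → ℝ) (hα : ∀ t ∈ Finset.Icc 1 T, 0 < α t)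
    (η : ℝ) (hη : 0 < η)
    (R : E → ℝ) (β : ℝ) (hβ : 0 ≤ β) (hR : StrongConvexOn Z β R)
    (μ : ℝ) (hμ : 0 ≤ μ)
    (ℓ : ℕ → E → ℝ)
    (hℓsc : ∀ t ∈ Finset.Icc 1 T, StrongConvexOn Z μ (ℓ t))
    (z : ℕ → E)
    -- `z 0` minimizes `R` over `Z`
    (hz0 : z 0 ∈ Z ∧ ∀ u ∈ Z, R (z 0) ≤ R u)
    -- for `t = 1, …, T`, `z t` minimizes `Σ_{s≤t} α_s ℓ_s + (1/η) R` over `Z`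
    (hz : ∀ t ∈ Finset.Icc 1 T, z t ∈ Z ∧ ∀ u ∈ Z,
      (∑ s ∈ Finset.Icc 1 t, α s * ℓ s (z t)) + (1/η) * R (z t)
        ≤ (∑ s ∈ Finset.Icc 1 t, α s * ℓ s u) + (1/η) * R u)
    (zstar : E) (hzstar : zstar ∈ Z) :
    ∑ t ∈ Finset.Icc 1 T, α t * (ℓ t (z t) - ℓ t zstar)
      ≤ (R zstar - R (z 0)) / η
        - ∑ t ∈ Finset.Icc 1 T,
            (μ * (∑ s ∈ Finset.Icc 1 (t-1), α s) / 2 + β/(2*η)) * ‖z (t-1) - z t‖^2 := by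
  -- explicit strong convexity of the FTRL objective at stage n
  have hone : ∀ n : ℕ, 1 ≤ n + 1 := fun n => Nat.succ_le_succ (Nat.zero_le n)
  have hAnn : ∀ n, n ≤ T → (0:ℝ) ≤ ∑ s ∈ Finset.Icc 1 n, α s := by
    intro n hn
    refine Finset.sum_nonneg fun s hs => ?_
    rw [Finset.mem_Icc] at hs
    exact (hα s (Finset.mem_Icc.mpr ⟨hs.1, le_trans hs.2 hn⟩)).le
  have scF : ∀ n, n ≤ T → StrongConvexOn Z (μ * (∑ s ∈ Finset.Icc 1 n, α s) + β/η)
      (fun u => (∑ s ∈ Finset.Icc 1 n, α s * ℓ s u) + (1/η) * R u) := by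
    intro n hn
    induction n with
    | zero =>
        have h0 : StrongConvexOn Z ((1/η) * β) (fun u => (1/η) * R u) :=
          strongConvexOn_smul' (by positivity) hR
        have e2 : μ * (∑ s ∈ Finset.Icc 1 0, α s) + β/η = (1/η) * β := by
          simp; ring
        have e1 : (fun u => (∑ s ∈ Finset.Icc 1 0, α s * ℓ s u) + (1/η) * R u)
            = (fun u => (1/η) * R u) := by funext u; simp
        rw [e2, e1]; exact h0
    | succ n ih =>
        have hn' : n ≤ T := le_trans (Nat.le_succ n) hn
        have hmem : n + 1 ∈ Finset.Icc 1 T := Finset.mem_Icc.mpr ⟨hone n, hn⟩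
        have hsum := strongConvexOn_add' (ih hn')
          (strongConvexOn_smul' (hα (n+1) hmem).le (hℓsc (n+1) hmem))
        have e2 : μ * (∑ s ∈ Finset.Icc 1 (n+1), α s) + β/η
            = (μ * (∑ s ∈ Finset.Icc 1 n, α s) + β/η) + α (n+1) * μ := by
          rw [Finset.sum_Icc_succ_top (hone n)]; ring
        have e1 : (fun u => (∑ s ∈ Finset.Icc 1 (n+1), α s * ℓ s u) + (1/η) * R u)
            = (fun u => ((∑ s ∈ Finset.Icc 1 n, α s * ℓ s u) + (1/η) * R u)
                + α (n+1) * ℓ (n+1) u) := by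
          funext u; rw [Finset.sum_Icc_succ_top (hone n)]; ring
        rw [e2, e1]; exact hsum
  -- z n minimizes the stage-n objective over Z, for every n ≤ T
  have hminF : ∀ n, n ≤ T → z n ∈ Z ∧ ∀ u ∈ Z,
      (∑ s ∈ Finset.Icc 1 n, α s * ℓ s (z n)) + (1/η) * R (z n)
        ≤ (∑ s ∈ Finset.Icc 1 n, α s * ℓ s u) + (1/η) * R u := by
    intro n hn
    match n with
    | 0 =>
        refine ⟨hz0.1, fun u hu => ?_⟩
        simp only [Finset.Icc_self, Finset.Icc_eq_empty_of_lt Nat.zero_lt_one,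
          Finset.sum_empty, zero_add]
        exact mul_le_mul_of_nonneg_left (hz0.2 u hu) (by positivity)
    | (m+1) => exact hz (m+1) (Finset.mem_Icc.mpr ⟨hone m, hn⟩)
  -- key telescoping inequality
  have key : ∀ n, n ≤ T →
      (∑ t ∈ Finset.Icc 1 n, α t * ℓ t (z t))
        + (∑ t ∈ Finset.Icc 1 n,
            (μ * (∑ s ∈ Finset.Icc 1 (t-1), α s) / 2 + β/(2*η)) * ‖z (t-1) - z t‖^2)
      ≤ ((∑ s ∈ Finset.Icc 1 n, α s * ℓ s (z n)) + (1/η) * R (z n)) - (1/η) * R (z 0) := by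
    intro n hn
    induction n with
    | zero => simp
    | succ n ih =>
        have hn' : n ≤ T := le_trans (Nat.le_succ n) hn
        have hIH := ih hn'
        have hmem : n + 1 ∈ Finset.Icc 1 T := Finset.mem_Icc.mpr ⟨hone n, hn⟩
        have hzn1 : z (n+1) ∈ Z := (hz (n+1) hmem).1
        have hsm : ((∑ s ∈ Finset.Icc 1 n, α s * ℓ s (z n)) + (1/η) * R (z n))
            + (μ * (∑ s ∈ Finset.Icc 1 n, α s) + β/η) / 2 * ‖z n - z (n+1)‖^2
            ≤ (∑ s ∈ Finset.Icc 1 n, α s * ℓ s (z (n+1))) + (1/η) * R (z (n+1)) :=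
          strong_min (scF n hn') (hminF n hn').1 (hminF n hn').2 hzn1
        simp only [Finset.sum_Icc_succ_top (hone n), Nat.add_sub_cancel]
        have hc : μ * (∑ s ∈ Finset.Icc 1 n, α s) / 2 + β/(2*η)
            = (μ * (∑ s ∈ Finset.Icc 1 n, α s) + β/η) / 2 := by
          field_simp
        rw [hc]
        linarith
  have hfin := key T le_rfl
  have hcmp := (hminF T le_rfl).2 zstar hzstar
  have hdiv : (R zstar - R (z 0)) / η = (1/η) * R zstar - (1/η) * R (z 0) := by
    field_simp
  simp only [mul_sub, Finset.sum_sub_distrib]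
  linarith
end

section
/- (OMD⁺ / prescient mirror descent regret bound) Let φ : E → ℝ be differentiable and β-strongly convex on Z with β > 0, let γ > 0, let each loss ℓ_t : E → ℝ be convex, and let z_0 ∈ Z. Suppose that for t = 1, …, T the point z_t ∈ Z minimizes z ↦ α_t ℓ_t(z) + (1/γ) V_{z_{t−1}}(z) over Z. Then for every z* ∈ Z: Σ_{t=1}^T α_t(ℓ_t(z_t) − ℓ_t(z*)) ≤ V_{z_0}(z*)/γ − Σ_{t=1}^T (β/(2γ)) ‖z_{t−1} − z_t‖². -/
/-!
Write `V_c` for the Bregman divergence of `φ`. If `z_t` minimizes `α_t ℓ_t + V_{z_{t-1}} / γ` over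
the convex set `Z`, moving from `z_t` towards `z*` cannot decrease the objective; differentiating
along this segment and using convexity of `ℓ_t` gives
`γ α_t (ℓ_t z_t - ℓ_t z*) ≤ ⟪∇φ z_t - ∇φ z_{t-1}, z* - z_t⟫`, and by the three-point identity the
right-hand side is `V_{z_{t-1}} z* - V_{z_t} z* - V_{z_{t-1}} z_t`. Strong convexity bounds
`V_{z_{t-1}} z_t` below by `β/2 ‖z_{t-1} - z_t‖²`; summing over `t`, the first two terms telescope
to `V_{z_0} z* - V_{z_T} z* ≤ V_{z_0} z*`.
-/

open Filter Set Topology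
open scoped RealInnerProductSpace

section LineDeriv

variable {E : Type*} [NormedAddCommGroup E] [NormedSpace ℝ E] {f : E → ℝ} {f' a : ℝ} {x v : E}

lemma HasLineDerivAt.le_of_forall_sub_le_mul {g : ℝ → ℝ} (hf : HasLineDerivAt ℝ f f' x v)
    (hg : Tendsto g (𝓝[>] 0) (𝓝 a)) (h : ∀ θ ∈ Ioo (0 : ℝ) 1, f (x + θ • v) - f x ≤ θ * g θ) :
    f' ≤ a := by
  refine le_of_tendsto_of_tendsto hf.tendsto_slope_zero_right hg ?_
  filter_upwards [Ioo_mem_nhdsGT (zero_lt_one' ℝ)] with θ hθ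
  rw [smul_eq_mul, inv_mul_le_iff₀ hθ.1]
  exact h θ hθ

lemma HasLineDerivAt.le_of_forall_mul_le_sub (hf : HasLineDerivAt ℝ f f' x v)
    (h : ∀ θ ∈ Ioo (0 : ℝ) 1, θ * a ≤ f (x + θ • v) - f x) : a ≤ f' := by
  refine ge_of_tendsto hf.tendsto_slope_zero_right ?_
  filter_upwards [Ioo_mem_nhdsGT (zero_lt_one' ℝ)] with θ hθ
  rw [smul_eq_mul, le_inv_mul_iff₀ hθ.1]
  exact h θ hθ

lemma StrongConvexOn.le_sub_of_hasLineDerivAt {s : Set E} {m : ℝ} {c : E}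
    (hf : StrongConvexOn s m f) (hd : HasLineDerivAt ℝ f f' c (x - c)) (hc : c ∈ s)
    (hx : x ∈ s) : f' + m / 2 * ‖x - c‖ ^ 2 ≤ f x - f c := by
  have hg : Tendsto (fun θ : ℝ ↦ f x - f c - m / 2 * (1 - θ) * ‖x - c‖ ^ 2) (𝓝[>] 0)
      (𝓝 (f x - f c - m / 2 * ‖x - c‖ ^ 2)) :=
    tendsto_nhdsWithin_of_tendsto_nhds (Continuous.tendsto' (by fun_prop) 0 _ (by simp))
  have := hd.le_of_forall_sub_le_mul hg fun θ hθ ↦ by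
    have hsc := hf.2 hx hc hθ.1.le (sub_nonneg.2 hθ.2.le) (add_sub_cancel θ 1)
    rw [show θ • x + (1 - θ) • c = c + θ • (x - c) by module] at hsc
    simp only [smul_eq_mul] at hsc
    linarith
  linarith

lemma IsMinOn.sub_le_of_hasLineDerivAt {s : Set E} {h ψ : E → ℝ} {ψ' : ℝ} {u w : E}
    (hmin : IsMinOn (fun z ↦ h z + ψ z) s w) (hh : ConvexOn ℝ s h)
    (hψ : HasLineDerivAt ℝ ψ ψ' w (u - w)) (hu : u ∈ s) (hw : w ∈ s) : h w - h u ≤ ψ' := by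
  refine hψ.le_of_forall_mul_le_sub fun θ hθ ↦ ?_
  have hseg : θ • u + (1 - θ) • w = w + θ • (u - w) := by module
  have hconv := hh.2 hu hw hθ.1.le (sub_nonneg.2 hθ.2.le) (add_sub_cancel θ 1)
  have hopt := isMinOn_iff.1 hmin _ (hh.1 hu hw hθ.1.le (sub_nonneg.2 hθ.2.le) (add_sub_cancel θ 1))
  rw [hseg] at hconv hopt
  simp only [smul_eq_mul] at hconv hopt
  linarith

end LineDeriv

section Bregman

variable {E : Type*} [NormedAddCommGroup E] [InnerProductSpace ℝ E]

def bregman (φ : E → ℝ) (g : E → E) (c z : E) : ℝ :=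
  φ z - ⟪g c, z - c⟫ - φ c

variable {φ : E → ℝ} {g : E → E}

lemma bregman_sub_bregman_sub_bregman (φ : E → ℝ) (g : E → E) (c w u : E) :
    bregman φ g c u - bregman φ g w u - bregman φ g c w = ⟪g w - g c, u - w⟫ := by
  simp only [bregman, inner_sub_left, inner_sub_right]
  ring

lemma hasFDerivAt_bregman {c w : E} (hφ : HasFDerivAt φ (innerSL ℝ (g w)) w) :
    HasFDerivAt (bregman φ g c) (innerSL ℝ (g w - g c)) w := by
  have hlin : HasFDerivAt (fun z ↦ ⟪g c, z - c⟫) (innerSL ℝ (g c)) w :=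
    (innerSL ℝ (g c)).hasFDerivAt.comp w ((hasFDerivAt_id w).sub_const c)
  rw [map_sub]
  exact (hφ.sub hlin).sub_const (φ c)

lemma StrongConvexOn.le_bregman {s : Set E} {m : ℝ} {c z : E} (hφs : StrongConvexOn s m φ)
    (hφ : HasFDerivAt φ (innerSL ℝ (g c)) c) (hc : c ∈ s) (hz : z ∈ s) :
    m / 2 * ‖z - c‖ ^ 2 ≤ bregman φ g c z := by
  have := hφs.le_sub_of_hasLineDerivAt (hφ.hasLineDerivAt (z - c)) hc hz
  simp only [innerSL_apply_apply] at this
  unfold bregman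
  linarith

lemma IsMinOn.mul_sub_le_bregman_sub_bregman {s : Set E} {m α γ : ℝ} {ℓ : E → ℝ} {c w u : E}
    (hmin : IsMinOn (fun z ↦ α * ℓ z + (1 / γ) * bregman φ g c z) s w)
    (hφc : HasFDerivAt φ (innerSL ℝ (g c)) c) (hφw : HasFDerivAt φ (innerSL ℝ (g w)) w)
    (hφs : StrongConvexOn s m φ)
    (hℓ : ConvexOn ℝ s ℓ) (hα : 0 ≤ α) (hγ : 0 < γ) (hc : c ∈ s) (hw : w ∈ s) (hu : u ∈ s) :
    α * (ℓ w - ℓ u)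
      ≤ (bregman φ g c u - bregman φ g w u) / γ - m / (2 * γ) * ‖c - w‖ ^ 2 := by
  have hopt := hmin.sub_le_of_hasLineDerivAt (hℓ.smul hα)
    (((hasFDerivAt_bregman hφw).const_mul (1 / γ)).hasLineDerivAt (u - w)) hu hw
  simp only [smul_eq_mul, FunLike.coe_smul, Pi.smul_apply, innerSL_apply_apply,
    ← bregman_sub_bregman_sub_bregman φ] at hopt
  calc α * (ℓ w - ℓ u)
      ≤ 1 / γ * (bregman φ g c u - bregman φ g w u - bregman φ g c w) := by linarith
    _ ≤ 1 / γ * (bregman φ g c u - bregman φ g w u - m / 2 * ‖w - c‖ ^ 2) := by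
      gcongr
      exact hφs.le_bregman hφc hc hw
    _ = _ := by rw [norm_sub_rev]; ring

end Bregman

lemma Finset.sum_Icc_pred_sub {M : Type*} [AddCommGroup M] (f : ℕ → M) (n : ℕ) :
    ∑ t ∈ Finset.Icc 1 n, (f (t - 1) - f t) = f 0 - f n := by
  induction n with
  | zero => simp
  | succ n ih =>
    rw [Finset.sum_Icc_succ_top (by omega), ih, Nat.add_sub_cancel]
    abel

theorem omd_plus_regret_bound_general
    {E : Type*} [NormedAddCommGroup E] [InnerProductSpace ℝ E]
    (Z : Set E)
    (T : ℕ)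
    (α : ℕ → ℝ) (hα : ∀ t ∈ Finset.Icc 1 T, 0 < α t)
    (φ : E → ℝ) (gφ : E → E)
    -- `φ` is differentiable with gradient `gφ`
    (hφdiff : ∀ x : E, HasFDerivAt φ (innerSL ℝ (gφ x)) x)
    (β : ℝ) (hβ : 0 < β) (hφsc : StrongConvexOn Z β φ)
    (γ : ℝ) (hγ : 0 < γ)
    (ℓ : ℕ → E → ℝ) (hℓ : ∀ t ∈ Finset.Icc 1 T, ConvexOn ℝ Set.univ (ℓ t))
    (z : ℕ → E) (hz0 : z 0 ∈ Z)
    -- for `t = 1, …, T`, `z t` minimizes `α_t ℓ_t + (1/γ) V_{z (t-1)}` over `Z`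
    (hz : ∀ t ∈ Finset.Icc 1 T, z t ∈ Z ∧ ∀ u ∈ Z,
      α t * ℓ t (z t) + (1/γ) * (φ (z t) - ⟪gφ (z (t-1)), z t - z (t-1)⟫ - φ (z (t-1)))
        ≤ α t * ℓ t u + (1/γ) * (φ u - ⟪gφ (z (t-1)), u - z (t-1)⟫ - φ (z (t-1))))
    (zstar : E) (hzstar : zstar ∈ Z) :
    ∑ t ∈ Finset.Icc 1 T, α t * (ℓ t (z t) - ℓ t zstar)
      ≤ (φ zstar - ⟪gφ (z 0), zstar - z 0⟫ - φ (z 0)) / γ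
        - ∑ t ∈ Finset.Icc 1 T, (β/(2*γ)) * ‖z (t-1) - z t‖^2 := by
  have hmem : ∀ t ≤ T, z t ∈ Z := fun t ht ↦ by
    rcases t with _ | t
    exacts [hz0, (hz (t + 1) (Finset.mem_Icc.2 ⟨by omega, ht⟩)).1]
  have hstep : ∀ t ∈ Finset.Icc 1 T, α t * (ℓ t (z t) - ℓ t zstar)
      ≤ (bregman φ gφ (z (t - 1)) zstar - bregman φ gφ (z t) zstar) / γ
        - β / (2 * γ) * ‖z (t - 1) - z t‖ ^ 2 := fun t ht ↦
    (isMinOn_iff.2 (hz t ht).2).mul_sub_le_bregman_sub_bregman (hφdiff _) (hφdiff _) hφsc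
      ((hℓ t ht).subset (subset_univ Z) hφsc.1) (hα t ht).le hγ
      (hmem _ (by grind)) (hmem t (by grind)) hzstar
  have hlast : 0 ≤ bregman φ gφ (z T) zstar :=
    (by positivity : 0 ≤ β / 2 * ‖zstar - z T‖ ^ 2).trans
      (hφsc.le_bregman (hφdiff _) (hmem T le_rfl) hzstar)
  calc ∑ t ∈ Finset.Icc 1 T, α t * (ℓ t (z t) - ℓ t zstar)
      ≤ ∑ t ∈ Finset.Icc 1 T, ((bregman φ gφ (z (t - 1)) zstar - bregman φ gφ (z t) zstar) / γ
          - β / (2 * γ) * ‖z (t - 1) - z t‖ ^ 2) := Finset.sum_le_sum hstep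
    _ = (bregman φ gφ (z 0) zstar - bregman φ gφ (z T) zstar) / γ
          - ∑ t ∈ Finset.Icc 1 T, β / (2 * γ) * ‖z (t - 1) - z t‖ ^ 2 := by
      rw [Finset.sum_sub_distrib, ← Finset.sum_div,
        Finset.sum_Icc_pred_sub (fun t ↦ bregman φ gφ (z t) zstar)]
    _ ≤ _ := sub_le_sub_right (div_le_div_of_nonneg_right (sub_le_self _ hlast) hγ.le) _

/-- OMD⁺ (prescient mirror descent) regret bound. The Bregman divergence is
`V_c (z) = φ z - ⟪∇φ c, z - c⟫ - φ c`, written out with the gradient `gφ` of `φ`. -/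
theorem omd_plus_regret_bound
    {E : Type*} [NormedAddCommGroup E] [InnerProductSpace ℝ E]
    (Z : Set E) (hZne : Z.Nonempty) (hZcl : IsClosed Z) (hZconv : Convex ℝ Z)
    (T : ℕ) (hT : 1 ≤ T)
    (α : ℕ → ℝ) (hα : ∀ t ∈ Finset.Icc 1 T, 0 < α t)
    (φ : E → ℝ) (gφ : E → E)
    -- `φ` is differentiable with gradient `gφ`
    (hφdiff : ∀ x : E, HasFDerivAt φ (innerSL ℝ (gφ x)) x)
    (β : ℝ) (hβ : 0 < β) (hφsc : StrongConvexOn Z β φ)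
    (γ : ℝ) (hγ : 0 < γ)
    (ℓ : ℕ → E → ℝ) (hℓ : ∀ t ∈ Finset.Icc 1 T, ConvexOn ℝ Set.univ (ℓ t))
    (z : ℕ → E) (hz0 : z 0 ∈ Z)
    -- for `t = 1, …, T`, `z t` minimizes `α_t ℓ_t + (1/γ) V_{z (t-1)}` over `Z`
    (hz : ∀ t ∈ Finset.Icc 1 T, z t ∈ Z ∧ ∀ u ∈ Z,
      α t * ℓ t (z t) + (1/γ) * (φ (z t) - ⟪gφ (z (t-1)), z t - z (t-1)⟫ - φ (z (t-1)))
        ≤ α t * ℓ t u + (1/γ) * (φ u - ⟪gφ (z (t-1)), u - z (t-1)⟫ - φ (z (t-1))))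
    (zstar : E) (hzstar : zstar ∈ Z) :
    ∑ t ∈ Finset.Icc 1 T, α t * (ℓ t (z t) - ℓ t zstar)
      ≤ (φ zstar - ⟪gφ (z 0), zstar - z 0⟫ - φ (z 0)) / γ
        - ∑ t ∈ Finset.Icc 1 T, (β/(2*γ)) * ‖z (t-1) - z t‖^2 :=
  omd_plus_regret_bound_general Z T α hα φ gφ hφdiff β hβ hφsc γ hγ ℓ hℓ z hz0 hz zstar hzstar
end

section
/- (Frank–Wolfe convergence rate) Let K ⊆ E be a nonempty compact convex set whose squared diameter is at most D (i.e. ‖a − b‖² ≤ D for all a, b ∈ K), and let f : E → ℝ be convex and L-smooth with L > 0. Define Frank–Wolfe iterates: w_0 ∈ K is arbitrary, and for t = 1, …, T set γ_t := 2/(t+1), let v_t ∈ K minimize v ↦ ⟨v, ∇f(w_{t−1})⟩ over K, and set w_t := (1 − γ_t) w_{t−1} + γ_t v_t. Then f(w_T) − min_{w∈K} f(w) ≤ 8LD/(T+1). -/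
open scoped BigOperators RealInnerProductSpace

/-!
For every `z ∈ K`, the descent lemma of `L`-smooth functions, the choice of `v t` and the
gradient inequality of convex functions give the one-step bound
`h t ≤ (1 - γ t) h (t-1) + γ t ^ 2 L D / 2` for the gap `h t = f (w t) - f z`. With
`γ t = 2 / (t + 1)` this recursion yields `h t ≤ 2 L D / (t + 1)` by induction, and taking the
infimum over `z ∈ K` bounds the gap to `sInf (f '' K)`.
-/

open AffineMap in
theorem ConvexOn.apply_sub_le_of_hasFDerivAt {E : Type*} [NormedAddCommGroup E]
    [NormedSpace ℝ E] {s : Set E} {f : E → ℝ} {f' : E →L[ℝ] ℝ} {x y : E}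
    (hf : ConvexOn ℝ s f) (hx : x ∈ s) (hy : y ∈ s) (hfx : HasFDerivAt f f' x) :
    f' (y - x) ≤ f y - f x := by
  let p : ℝ →ᵃ[ℝ] E := lineMap x y
  have hp : HasDerivAt (f ∘ p) (f' (y - x)) 0 :=
    (by simpa [p] using hfx : HasFDerivAt f f' (p 0)).comp_hasDerivAt 0 hasDerivAt_lineMap
  have := (hf.comp_affineMap p).le_slope_of_hasDerivAt
    (by simpa [p] using hx) (by simpa [p] using hy) zero_lt_one hp
  simpa [p, slope_def_field] using this

open AffineMap in
theorem apply_le_add_apply_sub_add_of_lipschitz_fderiv {E : Type*} [NormedAddCommGroup E]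
    [NormedSpace ℝ E] {f : E → ℝ} {f' : E → E →L[ℝ] ℝ} {L : ℝ}
    (hf : ∀ x, HasFDerivAt f (f' x) x) (hf' : ∀ x z, ‖f' x - f' z‖ ≤ L * ‖x - z‖) (x y : E) :
    f y ≤ f x + f' x (y - x) + L / 2 * ‖y - x‖ ^ 2 := by
  let p : ℝ →ᵃ[ℝ] E := lineMap x y
  set φ : ℝ → ℝ := fun s ↦ f (p s) - s * f' x (y - x) - L / 2 * s ^ 2 * ‖y - x‖ ^ 2
  have hφ : ∀ s : ℝ, HasDerivAt φ ((f' (p s) - f' x) (y - x) - L * s * ‖y - x‖ ^ 2) s := by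
    intro s
    have hcomp : HasDerivAt (fun s ↦ f (p s)) (f' (p s) (y - x)) s :=
      (hf (p s)).comp_hasDerivAt s hasDerivAt_lineMap
    have hquad : HasDerivAt (fun s ↦ L / 2 * s ^ 2 * ‖y - x‖ ^ 2) (L * s * ‖y - x‖ ^ 2) s := by
      refine (((hasDerivAt_pow 2 s).const_mul (L / 2)).mul_const _).congr_deriv ?_
      push_cast
      ring
    have hlin : HasDerivAt (fun s ↦ s * f' x (y - x)) (f' x (y - x)) s := by
      simpa using (hasDerivAt_id s).mul_const (f' x (y - x))
    rw [sub_apply]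
    exact (hcomp.sub hlin).sub hquad
  have hφ'_nonpos : ∀ s ∈ Set.Ioo (0 : ℝ) 1,
      (f' (p s) - f' x) (y - x) - L * s * ‖y - x‖ ^ 2 ≤ 0 := by
    intro s hs
    have hdist : ‖p s - x‖ = s * ‖y - x‖ := by
      rw [← vsub_eq_sub, lineMap_vsub_left, norm_smul, Real.norm_of_nonneg hs.1.le, vsub_eq_sub]
    have := calc (f' (p s) - f' x) (y - x) ≤ ‖f' (p s) - f' x‖ * ‖y - x‖ :=
          (Real.le_norm_self _).trans (ContinuousLinearMap.le_opNorm _ _)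
      _ ≤ L * ‖p s - x‖ * ‖y - x‖ := by gcongr; exact hf' _ _
      _ = L * s * ‖y - x‖ ^ 2 := by rw [hdist]; ring
    linarith
  have hanti : AntitoneOn φ (Set.Icc 0 1) := by
    refine antitoneOn_of_hasDerivWithinAt_nonpos (convex_Icc 0 1)
      (fun s _ ↦ (hφ s).continuousAt.continuousWithinAt) (fun s _ ↦ (hφ s).hasDerivWithinAt) ?_
    simpa only [interior_Icc] using hφ'_nonpos
  have := hanti (Set.left_mem_Icc.2 zero_le_one) (Set.right_mem_Icc.2 zero_le_one) zero_le_one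
  simp only [φ, p, lineMap_apply_zero, lineMap_apply_one] at this
  linarith

theorem two_div_succ_mem_Icc {t : ℕ} (ht : 1 ≤ t) : 2 / ((t : ℝ) + 1) ∈ Set.Icc (0 : ℝ) 1 := by
  have : (1 : ℝ) ≤ t := by exact_mod_cast ht
  exact ⟨by positivity, by rw [div_le_one (by positivity)]; linarith⟩

theorem le_four_mul_div_of_frankWolfe_recursion {e : ℕ → ℝ} {C : ℝ} {T : ℕ} (hC : 0 ≤ C)
    (he : ∀ t ∈ Finset.Icc 1 T,
      e t ≤ (1 - 2 / ((t : ℝ) + 1)) * e (t - 1) + (2 / ((t : ℝ) + 1)) ^ 2 * C) :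
    ∀ t ∈ Finset.Icc 1 T, e t ≤ 4 * C / ((t : ℝ) + 1) := by
  suffices ∀ t, 1 ≤ t → t ≤ T → e t ≤ 4 * C / ((t : ℝ) + 1) from
    fun t ht ↦ this t (Finset.mem_Icc.1 ht).1 (Finset.mem_Icc.1 ht).2
  refine Nat.le_induction (fun h1 ↦ ?_) (fun t ht ih htT ↦ ?_)
  · have := he 1 (Finset.mem_Icc.2 ⟨le_rfl, h1⟩)
    norm_num at this ⊢
    linarith
  · have hstep := he (t + 1) (Finset.mem_Icc.2 ⟨by omega, htT⟩)
    have hγ := (two_div_succ_mem_Icc (t := t + 1) (by omega)).2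
    have hprev := mul_le_mul_of_nonneg_left (ih (by omega)) (sub_nonneg.2 hγ)
    simp only [Nat.add_sub_cancel] at hstep
    push_cast at hstep hprev ⊢
    have hslack : 4 * C / ((t : ℝ) + 1 + 1) - ((1 - 2 / ((t : ℝ) + 1 + 1)) * (4 * C / ((t : ℝ) + 1))
        + (2 / ((t : ℝ) + 1 + 1)) ^ 2 * C) = 4 * C / (((t : ℝ) + 1) * ((t : ℝ) + 1 + 1) ^ 2) := by
      field_simp
      ring
    have : 0 ≤ 4 * C / (((t : ℝ) + 1) * ((t : ℝ) + 1 + 1) ^ 2) := by positivity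
    linarith

theorem frankWolfe_iterate_mem {E : Type*} [AddCommGroup E] [Module ℝ E] {K : Set E}
    (hK : Convex ℝ K) {T : ℕ} {w v : ℕ → E} {γ : ℕ → ℝ} (hw0 : w 0 ∈ K)
    (hv : ∀ t ∈ Finset.Icc 1 T, v t ∈ K) (hγ : ∀ t ∈ Finset.Icc 1 T, γ t ∈ Set.Icc (0 : ℝ) 1)
    (hw : ∀ t ∈ Finset.Icc 1 T, w t = (1 - γ t) • w (t - 1) + γ t • v t) :
    ∀ t ≤ T, w t ∈ K := by
  intro t
  induction t with
  | zero => exact fun _ ↦ hw0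
  | succ t ih =>
    intro htT
    have ht : t + 1 ∈ Finset.Icc 1 T := Finset.mem_Icc.2 ⟨by omega, htT⟩
    rw [hw _ ht]
    exact hK (ih (by omega)) (hv _ ht) (sub_nonneg.2 (hγ _ ht).2) (hγ _ ht).1 (by ring)

section InnerProductSpace

variable {E : Type*} [NormedAddCommGroup E] [InnerProductSpace ℝ E] {f : E → ℝ} {gf : E → E}
  {L : ℝ}

theorem frankWolfe_step_le (hf : ConvexOn ℝ Set.univ f)
    (hgf : ∀ x, HasFDerivAt f (innerSL ℝ (gf x)) x)
    (hsmooth : ∀ x z, ‖gf x - gf z‖ ≤ L * ‖x - z‖) (hL : 0 ≤ L) {p v z : E} {D γ : ℝ}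
    (hv : ⟪v, gf p⟫ ≤ ⟪z, gf p⟫) (hD : ‖v - p‖ ^ 2 ≤ D) (hγ : 0 ≤ γ) :
    f ((1 - γ) • p + γ • v) - f z ≤ (1 - γ) * (f p - f z) + γ ^ 2 * (L * D / 2) := by
  have hinner : ∀ x z, ‖innerSL ℝ (gf x) - innerSL ℝ (gf z)‖ ≤ L * ‖x - z‖ := fun x z ↦ by
    rw [← map_sub, innerSL_apply_norm]
    exact hsmooth x z
  have hdisp : (1 - γ) • p + γ • v - p = γ • (v - p) := by module
  have hdesc := apply_le_add_apply_sub_add_of_lipschitz_fderiv hgf hinner p ((1 - γ) • p + γ • v)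
  have hconv := hf.apply_sub_le_of_hasFDerivAt (Set.mem_univ p) (Set.mem_univ z) (hgf p)
  rw [hdisp, map_smul, innerSL_apply_apply, smul_eq_mul, norm_smul, Real.norm_of_nonneg hγ] at hdesc
  rw [innerSL_apply_apply] at hconv
  have hlin : γ * ⟪gf p, v - p⟫ ≤ γ * (f z - f p) := by
    refine mul_le_mul_of_nonneg_left (le_trans ?_ hconv) hγ
    rw [inner_sub_right, inner_sub_right, real_inner_comm v, real_inner_comm z]
    linarith
  have hquad : L / 2 * (γ * ‖v - p‖) ^ 2 ≤ γ ^ 2 * (L * D / 2) := by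
    rw [mul_pow]
    nlinarith [mul_le_mul_of_nonneg_left hD (mul_nonneg hL (sq_nonneg γ))]
  linarith

end InnerProductSpace

theorem frank_wolfe_convergence_rate_general
    {E : Type*} [NormedAddCommGroup E] [InnerProductSpace ℝ E]
    (K : Set E) (hKconv : Convex ℝ K)
    (D : ℝ) (hD : ∀ a ∈ K, ∀ b ∈ K, ‖a - b‖^2 ≤ D)
    (f : E → ℝ) (hfconv : ConvexOn ℝ Set.univ f)
    (gf : E → E)
    -- `f` is differentiable with gradient `gf`
    (hgf : ∀ x : E, HasFDerivAt f (innerSL ℝ (gf x)) x)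
    (L : ℝ) (hL : 0 < L)
    -- `f` is `L`-smooth
    (hsmooth : ∀ x z : E, ‖gf x - gf z‖ ≤ L * ‖x - z‖)
    (T : ℕ) (hT : 1 ≤ T)
    (w v : ℕ → E) (hw0 : w 0 ∈ K)
    -- `v t` minimizes `v ↦ ⟨v, ∇f (w (t-1))⟩` over `K`
    (hv : ∀ t ∈ Finset.Icc 1 T, v t ∈ K ∧ ∀ u ∈ K,
      ⟪v t, gf (w (t-1))⟫ ≤ ⟪u, gf (w (t-1))⟫)
    -- `w t = (1 - γ t) • w (t-1) + γ t • v t` with `γ t = 2/(t+1)`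
    (hwstep : ∀ t ∈ Finset.Icc 1 T,
      w t = (1 - 2/((t:ℝ)+1)) • w (t-1) + (2/((t:ℝ)+1)) • v t) :
    f (w T) - sInf (f '' K) ≤ 8 * L * D / ((T:ℝ) + 1) := by
  have hγ : ∀ t ∈ Finset.Icc 1 T, 2 / ((t : ℝ) + 1) ∈ Set.Icc (0 : ℝ) 1 :=
    fun t ht ↦ two_div_succ_mem_Icc (Finset.mem_Icc.1 ht).1
  have hwK := frankWolfe_iterate_mem hKconv hw0 (fun t ht ↦ (hv t ht).1) hγ hwstep
  have hLD : 0 ≤ L * D := mul_nonneg hL.le (by simpa using hD _ hw0 _ hw0)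
  have hgap : ∀ z ∈ K, f (w T) - f z ≤ 4 * (L * D / 2) / ((T : ℝ) + 1) := fun z hz ↦
    le_four_mul_div_of_frankWolfe_recursion (e := fun t ↦ f (w t) - f z) (by positivity)
      (fun t ht ↦ by
        have hp : w (t - 1) ∈ K := hwK _ (by grind)
        rw [hwstep t ht]
        exact frankWolfe_step_le hfconv hgf hsmooth hL.le ((hv t ht).2 z hz)
          (hD _ (hv t ht).1 _ hp) (hγ t ht).1)
      T (Finset.mem_Icc.2 ⟨hT, le_rfl⟩)
  have hconst : 4 * (L * D / 2) / ((T : ℝ) + 1) ≤ 8 * L * D / ((T : ℝ) + 1) :=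
    div_le_div_of_nonneg_right (by linarith) (by positivity)
  have hinf : f (w T) - 8 * L * D / ((T : ℝ) + 1) ≤ sInf (f '' K) :=
    le_csInf ⟨_, Set.mem_image_of_mem f hw0⟩ (Set.forall_mem_image.2 fun z hz ↦ by
      linarith [hgap z hz])
  linarith

/-- Frank–Wolfe convergence rate: `f (w T) - min_{w ∈ K} f w ≤ 8 L D / (T + 1)`. -/
theorem frank_wolfe_convergence_rate
    {E : Type*} [NormedAddCommGroup E] [InnerProductSpace ℝ E]
    (K : Set E) (hKne : K.Nonempty) (hKcomp : IsCompact K) (hKconv : Convex ℝ K)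
    (D : ℝ) (hD : ∀ a ∈ K, ∀ b ∈ K, ‖a - b‖^2 ≤ D)
    (f : E → ℝ) (hfconv : ConvexOn ℝ Set.univ f)
    (gf : E → E)
    -- `f` is differentiable with gradient `gf`
    (hgf : ∀ x : E, HasFDerivAt f (innerSL ℝ (gf x)) x)
    (L : ℝ) (hL : 0 < L)
    -- `f` is `L`-smooth
    (hsmooth : ∀ x z : E, ‖gf x - gf z‖ ≤ L * ‖x - z‖)
    (T : ℕ) (hT : 1 ≤ T)
    (w v : ℕ → E) (hw0 : w 0 ∈ K)
    -- `v t` minimizes `v ↦ ⟨v, ∇f (w (t-1))⟩` over `K`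
    (hv : ∀ t ∈ Finset.Icc 1 T, v t ∈ K ∧ ∀ u ∈ K,
      ⟪v t, gf (w (t-1))⟫ ≤ ⟪u, gf (w (t-1))⟫)
    -- `w t = (1 - γ t) • w (t-1) + γ t • v t` with `γ t = 2/(t+1)`
    (hwstep : ∀ t ∈ Finset.Icc 1 T,
      w t = (1 - 2/((t:ℝ)+1)) • w (t-1) + (2/((t:ℝ)+1)) • v t) :
    f (w T) - sInf (f '' K) ≤ 8 * L * D / ((T:ℝ) + 1) :=
  frank_wolfe_convergence_rate_general K hKconv D hD f hfconv gf hgf L hL hsmooth T hT w v hw0 hv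
    hwstep
end

section
/- Let K ⊆ E be a compact λ-strongly convex set with λ > 0, and let p, q ∈ E be nonzero vectors. If x_p ∈ K maximizes x ↦ ⟨p, x⟩ over K and x_q ∈ K maximizes x ↦ ⟨q, x⟩ over K, then ‖x_p − x_q‖ ≤ 2‖p − q‖ / (λ(‖p‖ + ‖q‖)). -/
/-!
Let `x` maximize `⟪p, ·⟫` over a `λ`-strongly convex set `K` and let `z ∈ K`. Pushing
`θ • x + (1 - θ) • z` in the direction of `p` by the radius `θ (1 - θ) (λ/2) ‖x - z‖²` keeps it
in `K`; comparing with `x` and letting `θ → 1` gives `⟪p, x - z⟫ ≥ (λ/2) ‖p‖ ‖x - z‖²` for all `z ∈ K`.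
Adding this inequality for `(p, x_p, x_q)` and `(q, x_q, x_p)` yields
`(λ/2) (‖p‖ + ‖q‖) ‖x_p - x_q‖² ≤ ⟪p - q, x_p - x_q⟫ ≤ ‖p - q‖ ‖x_p - x_q‖`.
-/

open scoped RealInnerProductSpace Topology
open Set Filter

section StronglyConvexSet

variable {E : Type*} [NormedAddCommGroup E] [InnerProductSpace ℝ E]

def IsStronglyConvexSet (lam : ℝ) (K : Set E) : Prop :=
  ∀ x ∈ K, ∀ z ∈ K, ∀ θ : ℝ, θ ∈ Icc (0 : ℝ) 1 →
    Metric.closedBall (θ • x + (1 - θ) • z) (θ * (1 - θ) * (lam / 2) * ‖x - z‖ ^ 2) ⊆ K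

variable {lam : ℝ} {K : Set E}

theorem IsStronglyConvexSet.add_mem_of_norm_le (hK : IsStronglyConvexSet lam K)
    {x z : E} (hx : x ∈ K) (hz : z ∈ K) {θ : ℝ} (hθ : θ ∈ Icc (0 : ℝ) 1) {v : E}
    (hv : ‖v‖ ≤ θ * (1 - θ) * (lam / 2) * ‖x - z‖ ^ 2) :
    θ • x + (1 - θ) • z + v ∈ K :=
  hK x hx z hz θ hθ (by rwa [Metric.mem_closedBall, dist_eq_norm, add_sub_cancel_left])

theorem IsStronglyConvexSet.mul_le_inner_sub_of_isMaxOn (hK : IsStronglyConvexSet lam K)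
    (hlam : 0 ≤ lam) {p x z : E} (hp : p ≠ 0) (hx : x ∈ K)
    (hmax : IsMaxOn (fun u => ⟪p, u⟫) K x) (hz : z ∈ K) {θ : ℝ} (hθ : θ ∈ Ico (0 : ℝ) 1) :
    θ * (lam / 2 * ‖p‖ * ‖x - z‖ ^ 2) ≤ ⟪p, x - z⟫ := by
  obtain ⟨hθ0, hθ1⟩ := hθ
  have hpn : 0 < ‖p‖ := norm_pos_iff.mpr hp
  set r := θ * (1 - θ) * (lam / 2) * ‖x - z‖ ^ 2
  have hθ1' : 0 < 1 - θ := sub_pos.mpr hθ1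
  have hr : 0 ≤ r := by positivity
  have hv : ‖(r / ‖p‖) • p‖ = r := by
    rw [norm_smul, Real.norm_of_nonneg (div_nonneg hr hpn.le), div_mul_cancel₀ _ hpn.ne']
  have hinner : ⟪p, θ • x + (1 - θ) • z + (r / ‖p‖) • p⟫
      = ⟪p, x⟫ - (1 - θ) * ⟪p, x - z⟫ + r * ‖p‖ := by
    rw [inner_add_right, inner_add_right, real_inner_smul_right, real_inner_smul_right,
      real_inner_smul_right, real_inner_self_eq_norm_sq, inner_sub_right]
    field_simp
    ring
  have hle : (1 - θ) * (θ * (lam / 2 * ‖p‖ * ‖x - z‖ ^ 2)) ≤ (1 - θ) * ⟪p, x - z⟫ := by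
    have hy : ⟪p, θ • x + (1 - θ) • z + (r / ‖p‖) • p⟫ ≤ ⟪p, x⟫ :=
      hmax (hK.add_mem_of_norm_le hx hz ⟨hθ0, hθ1.le⟩ hv.le)
    have hr_eq : r * ‖p‖ = (1 - θ) * (θ * (lam / 2 * ‖p‖ * ‖x - z‖ ^ 2)) := by ring
    linarith
  exact le_of_mul_le_mul_left hle hθ1'

theorem IsStronglyConvexSet.mul_norm_sq_le_inner_sub_of_isMaxOn
    (hK : IsStronglyConvexSet lam K) (hlam : 0 ≤ lam) {p x z : E} (hp : p ≠ 0) (hx : x ∈ K)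
    (hmax : IsMaxOn (fun u => ⟪p, u⟫) K x) (hz : z ∈ K) :
    lam / 2 * ‖p‖ * ‖x - z‖ ^ 2 ≤ ⟪p, x - z⟫ := by
  have hlim : Tendsto (fun θ : ℝ => θ * (lam / 2 * ‖p‖ * ‖x - z‖ ^ 2)) (𝓝[<] 1)
      (𝓝 (lam / 2 * ‖p‖ * ‖x - z‖ ^ 2)) :=
    ((continuous_mul_const _).tendsto' 1 _ (one_mul _)).mono_left nhdsWithin_le_nhds
  refine le_of_tendsto hlim ?_
  filter_upwards [Ioo_mem_nhdsLT one_pos] with θ hθ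
  exact hK.mul_le_inner_sub_of_isMaxOn hlam hp hx hmax hz (Ioo_subset_Ico_self hθ)

theorem IsStronglyConvexSet.mul_norm_sq_le_inner_sub_sub_of_isMaxOn
    (hK : IsStronglyConvexSet lam K) (hlam : 0 ≤ lam) {p q xp xq : E} (hp : p ≠ 0)
    (hq : q ≠ 0) (hxp : xp ∈ K) (hxq : xq ∈ K) (hpmax : IsMaxOn (fun u => ⟪p, u⟫) K xp)
    (hqmax : IsMaxOn (fun u => ⟪q, u⟫) K xq) :
    lam / 2 * (‖p‖ + ‖q‖) * ‖xp - xq‖ ^ 2 ≤ ⟪p - q, xp - xq⟫ := by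
  have hpq := hK.mul_norm_sq_le_inner_sub_of_isMaxOn hlam hp hxp hpmax hxq
  have hqp := hK.mul_norm_sq_le_inner_sub_of_isMaxOn hlam hq hxq hqmax hxp
  rw [norm_sub_rev, ← neg_sub xp, inner_neg_right] at hqp
  rw [inner_sub_left]
  linarith

end StronglyConvexSet

theorem strongly_convex_set_linear_maximizers_close_general
    {E : Type*} [NormedAddCommGroup E] [InnerProductSpace ℝ E]
    (K : Set E)
    (lam : ℝ) (hlam : 0 < lam)
    -- `K` is a `λ`-strongly convex set
    (hK : ∀ x ∈ K, ∀ z ∈ K, ∀ θ : ℝ, θ ∈ Set.Icc (0:ℝ) 1 →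
      Metric.closedBall (θ • x + (1-θ) • z) (θ*(1-θ)*(lam/2)*‖x - z‖^2) ⊆ K)
    (p q : E) (hp : p ≠ 0) (hq : q ≠ 0)
    (xp xq : E)
    (hxp : xp ∈ K ∧ ∀ u ∈ K, ⟪p, u⟫ ≤ ⟪p, xp⟫)
    (hxq : xq ∈ K ∧ ∀ u ∈ K, ⟪q, u⟫ ≤ ⟪q, xq⟫) :
    ‖xp - xq‖ ≤ 2*‖p - q‖ / (lam * (‖p‖ + ‖q‖)) := by
  have hK' : IsStronglyConvexSet lam K := hK
  have hmono := hK'.mul_norm_sq_le_inner_sub_sub_of_isMaxOn hlam.le hp hq hxp.1 hxq.1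
    (isMaxOn_iff.mpr hxp.2) (isMaxOn_iff.mpr hxq.2)
  have hCS : ⟪p - q, xp - xq⟫ ≤ ‖p - q‖ * ‖xp - xq‖ := real_inner_le_norm _ _
  have hden : 0 < lam * (‖p‖ + ‖q‖) := by positivity
  rw [le_div_iff₀ hden]
  rcases (norm_nonneg (xp - xq)).eq_or_lt with h | h
  · rw [← h, zero_mul]
    positivity
  · nlinarith

/-- Maximizers of linear functions over a `λ`-strongly convex compact set are
Hölder-stable in the linear functional. -/
theorem strongly_convex_set_linear_maximizers_close
    {E : Type*} [NormedAddCommGroup E] [InnerProductSpace ℝ E]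
    (K : Set E) (hKconv : Convex ℝ K) (hKcomp : IsCompact K)
    (lam : ℝ) (hlam : 0 < lam)
    -- `K` is a `λ`-strongly convex set
    (hK : ∀ x ∈ K, ∀ z ∈ K, ∀ θ : ℝ, θ ∈ Set.Icc (0:ℝ) 1 →
      Metric.closedBall (θ • x + (1-θ) • z) (θ*(1-θ)*(lam/2)*‖x - z‖^2) ⊆ K)
    (p q : E) (hp : p ≠ 0) (hq : q ≠ 0)
    (xp xq : E)
    (hxp : xp ∈ K ∧ ∀ u ∈ K, ⟪p, u⟫ ≤ ⟪p, xp⟫)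
    (hxq : xq ∈ K ∧ ∀ u ∈ K, ⟪q, u⟫ ≤ ⟪q, xq⟫) :
    ‖xp - xq‖ ≤ 2*‖p - q‖ / (lam * (‖p‖ + ‖q‖)) :=
  strongly_convex_set_linear_maximizers_close_general K lam hlam hK p q hp hq xp xq hxp hxq
end

section
/- Let f : ℝ^d → ℝ be convex and let X ⊆ ℝ^d be a nonempty closed convex set. Then the closure of the set {g ∈ ℝ^d : g is a subgradient of f at some x ∈ X relative to X} is a convex set. -/
/-!
Let `D` be the set of slopes `g` for which `f - ⟪g, ·⟫` is bounded below on `X`. It is convex,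
since `f - ⟪a g₁ + b g₂, ·⟫ = a (f - ⟪g₁, ·⟫) + b (f - ⟪g₂, ·⟫)`, and it contains every relative
subgradient. Conversely every `g ∈ D` is a limit of subgradients: in finite dimension the
regularized function `f - ⟪g, ·⟫ + δ/2 ‖· - x₀‖²` attains its minimum on `X` at some `z`, the
optimality condition makes `g + δ (x₀ - z)` a subgradient of `f` at `z`, and comparing with the
value at `x₀` gives `‖δ (x₀ - z)‖ ≤ √(2 A δ)` with `A` independent of `δ`. Hence the closure of
the subgradient set is the closure of the convex set `D`.
-/

open scoped RealInnerProductSpace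

open Filter Set Topology

theorem nonneg_of_forall_mem_Ioo_nonneg_add_mul {a b : ℝ}
    (h : ∀ t ∈ Ioo (0 : ℝ) 1, 0 ≤ a + t * b) : 0 ≤ a := by
  have hlim : Tendsto (fun t : ℝ => a + t * b) (𝓝[>] 0) (𝓝 a) := by
    have : Continuous (fun t : ℝ => a + t * b) := by fun_prop
    simpa using this.continuousWithinAt (s := Ioi 0) (x := 0) |>.tendsto
  exact ge_of_tendsto hlim (eventually_of_mem (Ioo_mem_nhdsGT one_pos) h)

theorem IsClosed.exists_isMinOn_add_sq_norm_sub {E : Type*} [NormedAddCommGroup E]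
    [ProperSpace E] {X : Set E} (hX : IsClosed X) (hXne : X.Nonempty) {f : E → ℝ}
    (hfc : ContinuousOn f X) (hfb : BddBelow (f '' X)) (c : E) {δ : ℝ} (hδ : 0 < δ) :
    ∃ z ∈ X, IsMinOn (fun x => f x + δ / 2 * ‖x - c‖ ^ 2) X z := by
  obtain ⟨x₀, hx₀⟩ := hXne
  obtain ⟨C, hC⟩ := hfb
  refine ContinuousOn.exists_isMinOn' (by fun_prop) hX hx₀ ?_
  have hcoercive : Tendsto (fun x => C + δ / 2 * ‖x - c‖ ^ 2) (cocompact E) atTop := by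
    have := tendsto_dist_right_cocompact_atTop c
    simp only [dist_eq_norm] at this
    exact tendsto_atTop_add_const_left _ _
      (((tendsto_pow_atTop two_ne_zero).comp this).const_mul_atTop (by positivity))
  filter_upwards [mem_inf_of_left (hcoercive.eventually_ge_atTop
    (f x₀ + δ / 2 * ‖x₀ - c‖ ^ 2)), mem_inf_of_right (mem_principal_self X)] with x hx hxX
  linarith [hC (mem_image_of_mem f hxX)]

section InnerProductSpace

variable {E : Type*} [NormedAddCommGroup E] [InnerProductSpace ℝ E]

def HasSubgradientWithinAt (f : E → ℝ) (g : E) (X : Set E) (x : E) : Prop :=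
  ∀ y ∈ X, f x + ⟪g, y - x⟫ ≤ f y

def subgradientsOn (f : E → ℝ) (X : Set E) : Set E :=
  {g | ∃ x ∈ X, HasSubgradientWithinAt f g X x}

theorem hasSubgradientWithinAt_sub_inner_iff {f : E → ℝ} {g h : E} {X : Set E} {x : E} :
    HasSubgradientWithinAt (fun y => f y - ⟪h, y⟫) g X x ↔
      HasSubgradientWithinAt f (g + h) X x := by
  refine forall₂_congr fun y _ => ?_
  rw [inner_add_left, inner_sub_right h]
  constructor <;> intro _ <;> linarith

theorem ConvexOn.hasSubgradientWithinAt_of_isMinOn_add_sq_norm_sub {f : E → ℝ} {X : Set E}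
    (hf : ConvexOn ℝ X f) {c z : E} {δ : ℝ} (hz : z ∈ X)
    (hmin : IsMinOn (fun x => f x + δ / 2 * ‖x - c‖ ^ 2) X z) :
    HasSubgradientWithinAt f (δ • (c - z)) X z := by
  intro y hy
  have hinner : ⟪δ • (c - z), y - z⟫ = -(δ * ⟪z - c, y - z⟫) := by
    rw [real_inner_smul_left, ← neg_sub z c, inner_neg_left, mul_neg]
  rw [hinner]
  suffices 0 ≤ f y - f z + δ * ⟪z - c, y - z⟫ by linarith
  refine nonneg_of_forall_mem_Ioo_nonneg_add_mul (b := δ / 2 * ‖y - z‖ ^ 2)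
    fun t ⟨ht0, ht1⟩ => nonneg_of_mul_nonneg_right ?_ ht0
  have hmin_t := hmin (hf.1.add_smul_sub_mem hz hy ⟨ht0.le, ht1.le⟩)
  have hconv : f (z + t • (y - z)) ≤ f z + t * (f y - f z) := by
    have := hf.2 hz hy (sub_nonneg.2 ht1.le) ht0.le (sub_add_cancel 1 t)
    rw [show (1 - t) • z + t • y = z + t • (y - z) by module, smul_eq_mul, smul_eq_mul] at this
    linarith
  have hsq : ‖z + t • (y - z) - c‖ ^ 2 =
      ‖z - c‖ ^ 2 + 2 * t * ⟪z - c, y - z⟫ + t ^ 2 * ‖y - z‖ ^ 2 := by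
    rw [add_sub_right_comm, norm_add_sq_real, real_inner_smul_right, norm_smul, mul_pow,
      Real.norm_eq_abs, sq_abs]
    ring
  simp only [mem_ofPred_eq, hsq] at hmin_t
  nlinarith

theorem subgradientsOn_subset_setOf_bddBelow (f : E → ℝ) (X : Set E) :
    subgradientsOn f X ⊆ {g | BddBelow ((fun x => f x - ⟪g, x⟫) '' X)} := by
  rintro g ⟨x, -, hx⟩
  refine ⟨f x - ⟪g, x⟫, forall_mem_image.2 fun y hy => ?_⟩
  have := hx y hy
  rw [inner_sub_right] at this
  linarith

theorem convex_setOf_bddBelow_sub_inner (f : E → ℝ) (X : Set E) :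
    Convex ℝ {g | BddBelow ((fun x => f x - ⟪g, x⟫) '' X)} := by
  rintro g₁ ⟨C₁, hC₁⟩ g₂ ⟨C₂, hC₂⟩ a b ha hb hab
  refine ⟨a * C₁ + b * C₂, forall_mem_image.2 fun x hx => ?_⟩
  have h₁ := mul_le_mul_of_nonneg_left (hC₁ (mem_image_of_mem _ hx)) ha
  have h₂ := mul_le_mul_of_nonneg_left (hC₂ (mem_image_of_mem _ hx)) hb
  have hfx : f x = a * f x + b * f x := by rw [← add_mul, hab, one_mul]
  simp only [inner_add_left, real_inner_smul_left] at h₁ h₂ ⊢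
  linarith

theorem mem_closure_subgradientsOn_of_bddBelow [ProperSpace E] {f : E → ℝ} {X : Set E}
    (hX : IsClosed X) (hXne : X.Nonempty) (hf : ConvexOn ℝ X f) (hfc : ContinuousOn f X)
    {g : E} (hg : BddBelow ((fun x => f x - ⟪g, x⟫) '' X)) :
    g ∈ closure (subgradientsOn f X) := by
  set φ := fun x => f x - ⟪g, x⟫
  obtain ⟨x₀, hx₀⟩ := hXne
  obtain ⟨C, hC⟩ := hg
  have hφ : ConvexOn ℝ X φ := hf.sub ((innerₛₗ ℝ g).concaveOn hf.1)
  have hφc : ContinuousOn φ X := by fun_prop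
  set A := φ x₀ - C
  have hA : 0 ≤ A := sub_nonneg.2 (hC (mem_image_of_mem φ hx₀))
  rw [Metric.mem_closure_iff]
  intro ε hε
  set δ := ε ^ 2 / (2 * A + 1)
  have hδ : 0 < δ := by positivity
  obtain ⟨z, hz, hmin⟩ := hX.exists_isMinOn_add_sq_norm_sub ⟨x₀, hx₀⟩ hφc ⟨C, hC⟩ x₀ hδ
  refine ⟨δ • (x₀ - z) + g, ⟨z, hz, hasSubgradientWithinAt_sub_inner_iff.1
    (hφ.hasSubgradientWithinAt_of_isMinOn_add_sq_norm_sub hz hmin)⟩, ?_⟩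
  have hbound : δ * ‖z - x₀‖ ^ 2 ≤ 2 * A := by
    have := hmin hx₀
    simp only [mem_ofPred_eq, sub_self, norm_zero] at this
    linarith [hC (mem_image_of_mem φ hz)]
  rw [dist_eq_norm, sub_add_cancel_right, norm_neg, norm_smul, Real.norm_eq_abs, abs_of_pos hδ,
    norm_sub_rev]
  refine lt_of_pow_lt_pow_left₀ 2 hε.le ?_
  calc (δ * ‖z - x₀‖) ^ 2 = δ * (δ * ‖z - x₀‖ ^ 2) := by ring
    _ ≤ δ * (2 * A) := by gcongr
    _ < ε ^ 2 := by
      rw [div_mul_eq_mul_div, div_lt_iff₀ (by positivity)]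
      nlinarith [pow_pos hε 2]

end InnerProductSpace

/-- The closure of the set of subgradients of a convex function `f` at points of a
nonempty closed convex set `X` (subgradients relative to `X`) is convex. -/
theorem closure_of_subgradient_set_convex {d : ℕ}
    (f : EuclideanSpace ℝ (Fin d) → ℝ) (hf : ConvexOn ℝ Set.univ f)
    (X : Set (EuclideanSpace ℝ (Fin d)))
    (hXne : X.Nonempty) (hXcl : IsClosed X) (hXconv : Convex ℝ X) :
    Convex ℝ (closure {g : EuclideanSpace ℝ (Fin d) |
      ∃ x ∈ X, ∀ y ∈ X, f x + ⟪g, y - x⟫ ≤ f y}) := by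
  change Convex ℝ (closure (subgradientsOn f X))
  have hfX : ConvexOn ℝ X f := hf.subset (subset_univ X) hXconv
  have hfc : ContinuousOn f X := (hf.continuousOn isOpen_univ).mono (subset_univ X)
  have hclosure : closure (subgradientsOn f X) =
      closure {g | BddBelow ((fun x => f x - ⟪g, x⟫) '' X)} :=
    subset_antisymm (closure_mono (subgradientsOn_subset_setOf_bddBelow f X))
      (closure_minimal (fun g hg => mem_closure_subgradientsOn_of_bddBelow hXcl hXne hfX hfc hg)
        isClosed_closure)
  rw [hclosure]
  exact (convex_setOf_bddBelow_sub_inner f X).closure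
end

section
/- Suppose η > 0 and 1 ≥ β > max{(1 − √(ηλ_min(H)))², (1 − √(ηλ_max(H)))²}. Then A, viewed as a complex 2n×2n matrix, is diagonalizable over ℂ: there exist an invertible matrix P ∈ ℂ^{2n×2n} and a diagonal matrix D ∈ ℂ^{2n×2n} such that A = P D P⁻¹, and moreover every diagonal entry of D has modulus at most √β. -/
/-!
In an orthonormal eigenbasis `(qᵢ)` of `H` the matrix `A` splits into the `2 × 2` blocks
`[[aᵢ, -β], [1, 0]]` with `aᵢ = 1 + β - η λᵢ`, and `(μ qᵢ, qᵢ)` is an eigenvector of `A` for each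
root `μ` of `μ² - aᵢ μ + β`. By convexity of `t ↦ (1 - t)²` the hypothesis at the extreme
eigenvalues gives `(1 - √(η λᵢ))² < β` for every `i`, and with `β ≤ 1` also `β < (1 + √(η λᵢ))²`;
these two say exactly that the discriminant `aᵢ² - 4β` is negative. Hence
each block has two distinct complex conjugate eigenvalues, whose product `β` forces their modulus
to be `√β`, and the `2n` eigenvectors form a basis.
-/

open Matrix Complex

theorem sub_sq_le_max_of_mem_Icc {c x y t : ℝ} (ht : t ∈ Set.Icc x y) :
    (c - t) ^ 2 ≤ max ((c - x) ^ 2) ((c - y) ^ 2) := by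
  have h : c - t ∈ Set.Icc (c - y) (c - x) := ⟨by linarith [ht.2], by linarith [ht.1]⟩
  rw [max_comm]
  exact (Even.convexOn_pow even_two).le_max_of_mem_Icc (Set.mem_univ _) (Set.mem_univ _) h

theorem sq_one_add_sub_lt_four_mul {z β : ℝ} (hz : (1 - √z) ^ 2 < β) (hβ : β ≤ 1) :
    (1 + β - z) ^ 2 < 4 * β := by
  have hz_pos : 0 < z := by
    by_contra! h
    rw [Real.sqrt_eq_zero'.2 h] at hz
    linarith
  set t := √z
  have ht : 0 < t := Real.sqrt_pos.2 hz_pos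
  rw [← Real.sq_sqrt hz_pos.le]
  have hβ_lt : β < (1 + t) ^ 2 := by nlinarith
  -- `4β - (1 + β - t²)² = h(β, t²) = (β - (1 - t)²)((1 + t)² - β)`
  nlinarith [mul_pos (sub_pos.2 hz) (sub_pos.2 hβ_lt)]

theorem quadratic_root_of_sq_add_sq {a c y : ℝ} (hy : a ^ 2 + (2 * y) ^ 2 = 4 * c) :
    let μ : ℂ := (a / 2 : ℝ) + y * I
    μ ^ 2 = a * μ - c ∧ ‖μ‖ = √c := by
  refine ⟨?_, ?_⟩
  · have hyc : (a : ℂ) ^ 2 + (2 * (y : ℂ)) ^ 2 = 4 * c := by exact_mod_cast hy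
    push_cast
    linear_combination (-1 / 4 : ℂ) * hyc + (y : ℂ) ^ 2 * I_sq
  · rw [norm_add_mul_I]
    congr 1
    linear_combination hy / 4

theorem exists_quadratic_roots_of_sq_lt {a c : ℝ} (h : a ^ 2 < 4 * c) :
    ∃ μ₁ μ₂ : ℂ, μ₁ ≠ μ₂ ∧ μ₁ ^ 2 = a * μ₁ - c ∧ μ₂ ^ 2 = a * μ₂ - c ∧
      ‖μ₁‖ = √c ∧ ‖μ₂‖ = √c := by
  set s := √(4 * c - a ^ 2)
  have hs : 0 < s := Real.sqrt_pos.2 (by linarith)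
  have hs2 : s ^ 2 = 4 * c - a ^ 2 := Real.sq_sqrt (by linarith)
  obtain ⟨hroot₁, hnorm₁⟩ := quadratic_root_of_sq_add_sq (a := a) (c := c) (y := s / 2)
    (by linarith)
  obtain ⟨hroot₂, hnorm₂⟩ := quadratic_root_of_sq_add_sq (a := a) (c := c) (y := -(s / 2))
    (by linarith)
  refine ⟨_, _, fun h ↦ ?_, hroot₁, hroot₂, hnorm₁, hnorm₂⟩
  have him := congrArg Complex.im h
  simp only [add_im, ofReal_im, mul_im, I_re, mul_zero, ofReal_re, I_im, mul_one, zero_add]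
    at him
  linarith

theorem Matrix.IsHermitian.mul_eigenvectorUnitary {𝕜 n : Type*} [RCLike 𝕜] [Fintype n]
    [DecidableEq n] {H : Matrix n n 𝕜} (hH : H.IsHermitian) :
    H * (hH.eigenvectorUnitary : Matrix n n 𝕜) =
      (hH.eigenvectorUnitary : Matrix n n 𝕜) * diagonal (RCLike.ofReal ∘ hH.eigenvalues) := by
  rw [← hH.conjStarAlgAut_star_eigenvectorUnitary, Unitary.conjStarAlgAut_star_apply,
    ← Matrix.mul_assoc, ← Matrix.mul_assoc, ← Unitary.coe_star, Unitary.coe_mul_star_self,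
    Matrix.one_mul]

section Companion

variable {m R K : Type*} [Fintype m] [DecidableEq m] [CommRing R] [Field K]

theorem smul_one_sub_smul_mul_eq {B Q : Matrix m m R} {d : m → R} (s t : R)
    (hBQ : B * Q = Q * diagonal d) :
    (s • 1 - t • B) * Q = Q * diagonal (fun i ↦ s - t * d i) := by
  rw [sub_mul, smul_mul, smul_mul, Matrix.one_mul, hBQ]
  ext i j
  simp only [Matrix.sub_apply, Matrix.smul_apply, mul_diagonal, smul_eq_mul]
  ring

/-- Its columns `(μ₁ i • qᵢ, qᵢ)` and `(μ₂ i • qᵢ, qᵢ)`, for the columns `qᵢ` of `Q`, are the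
eigenvectors of `fromBlocks B (-c • 1) 1 0` when `B qᵢ = aᵢ qᵢ` and `μ₁ i`, `μ₂ i` are the roots
of `μ² = aᵢ μ - c`. -/
def companionEigenvectors (Q : Matrix m m R) (μ₁ μ₂ : m → R) : Matrix (m ⊕ m) (m ⊕ m) R :=
  fromBlocks (Q * diagonal μ₁) (Q * diagonal μ₂) Q Q

theorem det_companionEigenvectors (Q : Matrix m m R) (μ₁ μ₂ : m → R) :
    (companionEigenvectors Q μ₁ μ₂).det = Q.det ^ 2 * ∏ i, (μ₁ i - μ₂ i) := by
  have h : companionEigenvectors Q μ₁ μ₂ =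
      fromBlocks Q 0 0 Q * fromBlocks (diagonal μ₁) (diagonal μ₂) 1 1 := by
    simp [companionEigenvectors, fromBlocks_multiply]
  rw [h, det_mul, det_fromBlocks_zero₂₁, det_fromBlocks_one₂₂, mul_one, diagonal_sub,
    det_diagonal, sq]

theorem isUnit_det_companionEigenvectors {Q : Matrix m m K} (hQ : IsUnit Q.det)
    {μ₁ μ₂ : m → K} (hμ : ∀ i, μ₁ i ≠ μ₂ i) : IsUnit (companionEigenvectors Q μ₁ μ₂).det := by
  rw [det_companionEigenvectors]
  exact (hQ.pow 2).mul <| isUnit_iff_ne_zero.2 <|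
    Finset.prod_ne_zero_iff.2 fun i _ ↦ sub_ne_zero.2 (hμ i)

theorem mul_mul_diagonal_add_eq {B Q : Matrix m m R} {a μ : m → R} {c : R}
    (hBQ : B * Q = Q * diagonal a) (hμ : ∀ i, μ i ^ 2 = a i * μ i - c) :
    B * (Q * diagonal μ) + (-c • 1) * Q = Q * diagonal μ * diagonal μ := by
  rw [← Matrix.mul_assoc, hBQ, smul_mul, Matrix.one_mul]
  ext i j
  simp only [Matrix.add_apply, Matrix.smul_apply, mul_diagonal, smul_eq_mul]
  linear_combination (-Q i j) * hμ j

theorem fromBlocks_mul_companionEigenvectors {B Q : Matrix m m R} {a μ₁ μ₂ : m → R} {c : R}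
    (hBQ : B * Q = Q * diagonal a) (hμ₁ : ∀ i, μ₁ i ^ 2 = a i * μ₁ i - c)
    (hμ₂ : ∀ i, μ₂ i ^ 2 = a i * μ₂ i - c) :
    fromBlocks B (-c • 1) 1 0 * companionEigenvectors Q μ₁ μ₂ =
      companionEigenvectors Q μ₁ μ₂ * diagonal (Sum.elim μ₁ μ₂) := by
  rw [← fromBlocks_diagonal, companionEigenvectors, fromBlocks_multiply, fromBlocks_multiply,
    mul_mul_diagonal_add_eq hBQ hμ₁, mul_mul_diagonal_add_eq hBQ hμ₂]
  simp

end Companion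

theorem heavy_ball_matrix_diagonalizable_general {n : ℕ}
    (H : Matrix (Fin n) (Fin n) ℝ) (hH : H.IsHermitian)
    (lmin lmax : ℝ)
    (hlmin : IsLeast (Set.range hH.eigenvalues) lmin)
    (hlmax : IsGreatest (Set.range hH.eigenvalues) lmax)
    (η β : ℝ) (hη : 0 < η) (hβ1 : β ≤ 1)
    (hβ : max ((1 - Real.sqrt (η * lmin))^2) ((1 - Real.sqrt (η * lmax))^2) < β)
    (A : Matrix (Fin n ⊕ Fin n) (Fin n ⊕ Fin n) ℝ)
    (hA : A = Matrix.fromBlocks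
      ((1 + β) • (1 : Matrix (Fin n) (Fin n) ℝ) - η • H)
      ((-β) • (1 : Matrix (Fin n) (Fin n) ℝ))
      (1 : Matrix (Fin n) (Fin n) ℝ) (0 : Matrix (Fin n) (Fin n) ℝ)) :
    ∃ (P D : Matrix (Fin n ⊕ Fin n) (Fin n ⊕ Fin n) ℂ),
      IsUnit P.det ∧ D.IsDiag ∧
      A.map (fun x : ℝ => (x : ℂ)) = P * D * P⁻¹ ∧
      ∀ i, ‖D i i‖ ≤ Real.sqrt β := by
  set a : Fin n → ℝ := fun i ↦ 1 + β - η * hH.eigenvalues i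
  have hdisc (i : Fin n) : a i ^ 2 < 4 * β := by
    have hmono {x y : ℝ} (h : x ≤ y) : √(η * x) ≤ √(η * y) :=
      Real.sqrt_le_sqrt (mul_le_mul_of_nonneg_left h hη.le)
    refine sq_one_add_sub_lt_four_mul (lt_of_le_of_lt ?_ hβ) hβ1
    exact sub_sq_le_max_of_mem_Icc ⟨hmono (hlmin.2 ⟨i, rfl⟩), hmono (hlmax.2 ⟨i, rfl⟩)⟩
  choose μ₁ μ₂ hne hμ₁ hμ₂ hnorm₁ hnorm₂ using fun i ↦ exists_quadratic_roots_of_sq_lt (hdisc i)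
  set f := Complex.ofRealHom.mapMatrix (m := Fin n)
  set Q : Matrix (Fin n) (Fin n) ℝ := (hH.eigenvectorUnitary : Matrix (Fin n) (Fin n) ℝ)
  have hQ : IsUnit (f Q).det := by
    rw [← RingHom.map_det]
    exact (UnitaryGroup.det_isUnit hH.eigenvectorUnitary).map _
  have hBQ : f ((1 + β) • 1 - η • H) * f Q = f Q * diagonal (fun i ↦ (a i : ℂ)) := by
    rw [← map_mul, smul_one_sub_smul_mul_eq _ _ (by simpa using hH.mul_eigenvectorUnitary),
      map_mul, RingHom.mapMatrix_apply (M := diagonal _), diagonal_map (map_zero _)]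
    rfl
  have hAc : A.map ((↑) : ℝ → ℂ) = fromBlocks (f ((1 + β) • 1 - η • H)) (-(β : ℂ) • 1) 1 0 := by
    rw [hA, fromBlocks_map, map_smul' _ _ _ ofReal_mul, Matrix.map_one _ ofReal_zero ofReal_one,
      Matrix.map_zero _ ofReal_zero, ofReal_neg]
    rfl
  have hP := isUnit_det_companionEigenvectors hQ hne
  refine ⟨_, diagonal (Sum.elim μ₁ μ₂), hP, isDiag_diagonal _, ?_, ?_⟩
  · rw [hAc, ← fromBlocks_mul_companionEigenvectors hBQ hμ₁ hμ₂,
      mul_nonsing_inv_cancel_right _ _ hP]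
  · rintro (i | i) <;> simp [hnorm₁, hnorm₂]

/-- The heavy-ball iteration matrix `A` is diagonalizable over `ℂ`, with all
eigenvalues of modulus at most `√β`. -/
theorem heavy_ball_matrix_diagonalizable {n : ℕ} (hn : 0 < n)
    (H : Matrix (Fin n) (Fin n) ℝ) (hH : H.IsHermitian) (hPSD : H.PosSemidef)
    (lmin lmax : ℝ)
    (hlmin : IsLeast (Set.range hH.eigenvalues) lmin)
    (hlmax : IsGreatest (Set.range hH.eigenvalues) lmax)
    (η β : ℝ) (hη : 0 < η) (hβ1 : β ≤ 1)
    (hβ : max ((1 - Real.sqrt (η * lmin))^2) ((1 - Real.sqrt (η * lmax))^2) < β)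
    (A : Matrix (Fin n ⊕ Fin n) (Fin n ⊕ Fin n) ℝ)
    (hA : A = Matrix.fromBlocks
      ((1 + β) • (1 : Matrix (Fin n) (Fin n) ℝ) - η • H)
      ((-β) • (1 : Matrix (Fin n) (Fin n) ℝ))
      (1 : Matrix (Fin n) (Fin n) ℝ) (0 : Matrix (Fin n) (Fin n) ℝ)) :
    ∃ (P D : Matrix (Fin n ⊕ Fin n) (Fin n ⊕ Fin n) ℂ),
      IsUnit P.det ∧ D.IsDiag ∧
      A.map (fun x : ℝ => (x : ℂ)) = P * D * P⁻¹ ∧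
      ∀ i, ‖D i i‖ ≤ Real.sqrt β :=
  heavy_ball_matrix_diagonalizable_general H hH lmin lmax hlmin hlmax η β hη hβ1 hβ A hA
end

section
/- Let 0 < λ_min ≤ λ_max be real numbers, set κ := λ_max/λ_min, η := 1/λ_max and β := (1 − 1/(2√κ))². Then min{h(β, ηλ_min), h(β, ηλ_max)} > 0 and √2(β+1)/√(min{h(β, ηλ_min), h(β, ηλ_max)}) ≤ 4√κ. -/
/-- `h (β, z) = -(β - (1 - √z)²) (β - (1 + √z)²)`. -/
noncomputable def hfun (β z : ℝ) : ℝ :=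
  -((β - (1 - Real.sqrt z)^2) * (β - (1 + Real.sqrt z)^2))

set_option maxHeartbeats 1000000 in
/-- With `η = 1/λ_max` and `β = (1 - 1/(2√κ))²`, the constant
`C₀ = √2 (β+1) / √(min (h (β, η λ_min)) (h (β, η λ_max)))` is at most `4√κ`. -/
theorem C0_le_four_sqrt_kappa
    (lmin lmax : ℝ) (h0 : 0 < lmin) (hle : lmin ≤ lmax)
    (κ η β : ℝ) (hκ : κ = lmax / lmin) (hη : η = 1 / lmax)
    (hβ : β = (1 - 1/(2 * Real.sqrt κ))^2) :
    0 < min (hfun β (η * lmin)) (hfun β (η * lmax)) ∧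
      Real.sqrt 2 * (β + 1) / Real.sqrt (min (hfun β (η * lmin)) (hfun β (η * lmax)))
        ≤ 4 * Real.sqrt κ := by
  have hmax : 0 < lmax := lt_of_lt_of_le h0 hle
  have hκ1 : 1 ≤ κ := by
    rw [hκ]; rw [le_div_iff₀ h0]; linarith
  set s := Real.sqrt κ with hsdef
  have hs : 1 ≤ s := by
    rw [hsdef, show (1:ℝ) = Real.sqrt 1 by simp]
    exact Real.sqrt_le_sqrt hκ1
  have hspos : 0 < s := lt_of_lt_of_le one_pos hs
  have hsq : s ^ 2 = κ := Real.sq_sqrt (by linarith)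
  -- η * lmax = 1, η * lmin = 1/κ
  have hηmax : η * lmax = 1 := by rw [hη]; field_simp
  have hηmin : η * lmin = 1 / κ := by
    rw [hη, hκ]; field_simp
  set u := 1 / s with hu_def
  have hupos : 0 < u := by positivity
  have hu1 : u ≤ 1 := by rw [hu_def]; exact (div_le_one hspos).mpr hs
  have hsu : s * u = 1 := by rw [hu_def]; field_simp
  have hβ' : β = (1 - u / 2) ^ 2 := by
    rw [hβ, hu_def]; congr 1; ring
  -- evaluate hfun at the two points
  have hB : hfun β (η * lmax) = β * (4 - β) := by
    rw [hηmax]; unfold hfun; rw [Real.sqrt_one]; ring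
  have hA : hfun β (η * lmin) = -((β - (1 - u)^2) * (β - (1 + u)^2)) := by
    rw [hηmin]
    unfold hfun
    rw [one_div, Real.sqrt_inv, ← hsdef, ← one_div, ← hu_def]
  clear_value s u
  have hAge : hfun β (η * lmin) ≥ u ^ 2 / 2 := by
    rw [hA, hβ']; nlinarith [mul_nonneg (sq_nonneg u) (sub_nonneg.mpr hu1), mul_nonneg (mul_nonneg (sq_nonneg u) hupos.le) (sub_nonneg.mpr hu1)]
  have hBge : hfun β (η * lmax) ≥ u ^ 2 / 2 := by
    rw [hB, hβ']; nlinarith [sq_nonneg (1 - u / 2), sq_nonneg u]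
  have hmge : min (hfun β (η * lmin)) (hfun β (η * lmax)) ≥ u ^ 2 / 2 :=
    le_min hAge hBge
  have hmpos : 0 < min (hfun β (η * lmin)) (hfun β (η * lmax)) :=
    lt_of_lt_of_le (by positivity) hmge
  refine ⟨hmpos, ?_⟩
  set m := min (hfun β (η * lmin)) (hfun β (η * lmax)) with hm_def
  clear_value m
  have hβpos : 0 ≤ β := by rw [hβ']; positivity
  have hβle : β ≤ 1 := by
    rw [hβ']; nlinarith [hupos.le, hu1]
  rw [div_le_iff₀ (Real.sqrt_pos.mpr hmpos)]
  have h1 : Real.sqrt 2 * (β + 1) = Real.sqrt (2 * (β + 1) ^ 2) := by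
    rw [Real.sqrt_mul (by norm_num), Real.sqrt_sq (by linarith)]
  have h2 : 4 * s * Real.sqrt m = Real.sqrt (16 * s ^ 2 * m) := by
    rw [show (16 : ℝ) * s ^ 2 * m = (4 * s) ^ 2 * m by ring,
      Real.sqrt_mul (by positivity), Real.sqrt_sq (by positivity)]
  rw [h1, h2]
  apply Real.sqrt_le_sqrt
  have hsu2 : s ^ 2 * u ^ 2 = 1 := by
    have h4 : (s * u) ^ 2 = 1 := by rw [hsu]; norm_num
    linear_combination h4
  have h3 : 8 ≤ 16 * s ^ 2 * m := by
    have h5 := mul_le_mul_of_nonneg_left hmge (show (0:ℝ) ≤ 16 * s ^ 2 by positivity)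
    have h6 : 16 * s ^ 2 * (u ^ 2 / 2) = 8 := by linear_combination 8 * hsu2
    linarith
  have h7 : 2 * (β + 1) ^ 2 ≤ 8 := by nlinarith [hβle, hβpos]
  linarith
end

section
/- (Non-asymptotic accelerated local linear rate of heavy ball) Let f : ℝ^d → ℝ be twice continuously differentiable, μ-strongly convex and α-smooth with 0 < μ ≤ α, and suppose its Hessian is α-Lipschitz. Let κ := α/μ and let w* be the unique minimizer of f. Run Polyak's heavy-ball method with step size η = 1/α and momentum parameter β = (1 − 1/(2√κ))² from initial points w₀, w₋₁ satisfying ‖(w₀ − w*; w₋₁ − w*)‖ ≤ 1/(683 κ^{3/2}). Then for all t ≥ 0, ‖(w_{t+1} − w*; w_t − w*)‖ ≤ (1 − 1/(4√κ))^{t+1} · 8√κ · ‖(w₀ − w*; w₋₁ − w*)‖. -/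
/-!
Near `w*` the gradient is `H (w - w*)` up to an error `α ‖w - w*‖²`, where `H = ∇²f(w*)` is
symmetric with spectrum in `[μ, α]`. In an eigenbasis of `η H` the heavy-ball error therefore
obeys, coordinatewise, `x⁺ = (1 + r² - λ) x - r² x⁻ - (quadratic error)` with `r = 1 - δ`,
`δ = 1/(2√κ)` and `λ ∈ [4δ², 1]`. For `c = (1 + r² - λ)/2` the quadratic form
`(x - c x⁻)²/(r² - c²) + x⁻²` is multiplied by exactly `r²` under the linear step, and since
`r² - c² ≥ δ²/2` it is comparable to `x² + x⁻²` up to a factor `O(1/δ²)`. The square root `y`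
of the summed form thus satisfies `y⁺ ≤ r y + O(y²/δ)`; starting within `O(δ³)` of `w*`, the
quadratic term eats at most half of the gap `δ`, which gives the rate `1 - δ/2 = 1 - 1/(4√κ)`,
and the norm comparison gives the constant `4/δ = 8√κ`.
-/

open scoped RealInnerProductSpace
open Filter Topology

section Gradient

variable {E : Type*} [NormedAddCommGroup E] [InnerProductSpace ℝ E]

theorem inner_fderiv_gradient_apply [CompleteSpace E] (f : E → ℝ) (x u v : E) :
    ⟪fderiv ℝ (gradient f) x u, v⟫ = fderiv ℝ (fderiv ℝ f) x u v := by
  have hcomp : gradient f = (InnerProductSpace.toDual ℝ E).symm ∘ fderiv ℝ f := rfl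
  rw [hcomp, LinearIsometryEquiv.comp_fderiv]
  exact InnerProductSpace.toDual_symm_apply

theorem isSymmetric_fderiv_gradient [CompleteSpace E] {f : E → ℝ} {x : E}
    (hf : ContDiffAt ℝ 2 f x) :
    (fderiv ℝ (gradient f) x : E →ₗ[ℝ] E).IsSymmetric := by
  intro u v
  rw [ContinuousLinearMap.coe_coe, real_inner_comm _ u, inner_fderiv_gradient_apply,
    inner_fderiv_gradient_apply, (hf.isSymmSndFDerivAt (by simp)) u v]

theorem differentiable_gradient [CompleteSpace E] {f : E → ℝ} (hf : ContDiff ℝ 2 f) :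
    Differentiable ℝ (gradient f) :=
  (InnerProductSpace.toDual ℝ E).symm.differentiable.comp
    ((hf.fderiv_right (by norm_num)).differentiable one_ne_zero)

theorem gradient_eq_zero_of_forall_le [CompleteSpace E] {f : E → ℝ} {x : E}
    (hx : ∀ w, f x ≤ f w) : gradient f x = 0 := by
  simp [gradient, IsLocalMin.fderiv_eq_zero (Eventually.of_forall hx)]

theorem mul_norm_sq_le_inner_gradient_sub_gradient [CompleteSpace E] {f : E → ℝ} {μ : ℝ}
    (hsc : ∀ x z : E, f x + ⟪gradient f x, z - x⟫ + (μ/2) * ‖z - x‖^2 ≤ f z) (x z : E) :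
    μ * ‖x - z‖^2 ≤ ⟪gradient f x - gradient f z, x - z⟫ := by
  have hxz := hsc x z
  have hzx := hsc z x
  rw [← neg_sub x z, inner_neg_right, norm_neg] at hxz
  rw [inner_sub_left]
  linarith

theorem mul_norm_sq_le_inner_fderiv_apply_self {g : E → E} {x : E} {μ : ℝ}
    (hg : DifferentiableAt ℝ g x)
    (hmono : ∀ y z, μ * ‖y - z‖^2 ≤ ⟪g y - g z, y - z⟫) (u : E) :
    μ * ‖u‖^2 ≤ ⟪fderiv ℝ g x u, u⟫ := by
  have hslope : Tendsto (fun t : ℝ => ⟪t⁻¹ • (g (x + t • u) - g x), u⟫) (𝓝[>] 0)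
      (𝓝 ⟪fderiv ℝ g x u, u⟫) :=
    (hg.hasFDerivAt.hasLineDerivAt u).tendsto_slope_zero_right.inner tendsto_const_nhds
  refine ge_of_tendsto hslope (eventually_nhdsWithin_of_forall fun t (ht : 0 < t) => ?_)
  have h := hmono (x + t • u) x
  rw [add_sub_cancel_left, norm_smul, Real.norm_of_nonneg ht.le, inner_smul_right] at h
  rw [inner_smul_left, RCLike.conj_to_real, le_inv_mul_iff₀ ht]
  nlinarith

theorem norm_sub_sub_fderiv_le_of_lipschitz_fderiv {F : Type*} [NormedAddCommGroup F]
    [NormedSpace ℝ F] {g : E → F} {L : ℝ} (hL : 0 ≤ L) (hg : Differentiable ℝ g)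
    (hlip : ∀ y z, ‖fderiv ℝ g y - fderiv ℝ g z‖ ≤ L * ‖y - z‖) (x y : E) :
    ‖g y - g x - fderiv ℝ g x (y - x)‖ ≤ L * ‖y - x‖^2 := by
  have hbound : ∀ z ∈ Metric.closedBall x ‖y - x‖, ‖fderiv ℝ g z - fderiv ℝ g x‖ ≤ L * ‖y - x‖ :=
    fun z hz => (hlip z x).trans (mul_le_mul_of_nonneg_left (by rwa [← dist_eq_norm]) hL)
  calc ‖g y - g x - fderiv ℝ g x (y - x)‖ ≤ L * ‖y - x‖ * ‖y - x‖ :=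
        (convex_closedBall x _).norm_image_sub_le_of_norm_fderiv_le' (fun z _ => hg z) hbound
          (Metric.mem_closedBall_self (norm_nonneg _)) (by simp [dist_eq_norm])
    _ = L * ‖y - x‖^2 := by ring

end Gradient

namespace LinearMap.IsSymmetric

variable {E : Type*} [NormedAddCommGroup E] [InnerProductSpace ℝ E] [FiniteDimensional ℝ E]
  {T : E →ₗ[ℝ] E} {n : ℕ}

theorem le_eigenvalues (hT : T.IsSymmetric) (hn : Module.finrank ℝ E = n) {m : ℝ}
    (h : ∀ u, m * ‖u‖^2 ≤ ⟪T u, u⟫) (i : Fin n) :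
    m ≤ hT.eigenvalues hn i := by
  have hb := h (hT.eigenvectorBasis hn i)
  rwa [hT.apply_eigenvectorBasis, RCLike.ofReal_real_eq_id, id_eq, real_inner_smul_left,
    real_inner_self_eq_norm_sq, (hT.eigenvectorBasis hn).orthonormal.1 i, one_pow, mul_one,
    mul_one] at hb

theorem eigenvalues_le (hT : T.IsSymmetric) (hn : Module.finrank ℝ E = n) {M : ℝ}
    (h : ∀ u, ‖T u‖ ≤ M * ‖u‖) (i : Fin n) :
    hT.eigenvalues hn i ≤ M := by
  have hb := h (hT.eigenvectorBasis hn i)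
  rw [hT.apply_eigenvectorBasis, RCLike.ofReal_real_eq_id, id_eq, norm_smul,
    (hT.eigenvectorBasis hn).orthonormal.1 i, mul_one, mul_one] at hb
  exact (le_abs_self _).trans hb

end LinearMap.IsSymmetric

theorem sqrt_norm_sub_sq_add_sq_le {E : Type*} [SeminormedAddCommGroup E] (a b w : E) :
    √(‖a - b‖^2 + ‖w‖^2) ≤ √(‖a‖^2 + ‖w‖^2) + ‖b‖ := by
  have ha : ‖a‖ ≤ √(‖a‖^2 + ‖w‖^2) := Real.le_sqrt_of_sq_le (by nlinarith [sq_nonneg ‖w‖])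
  have hs := Real.sq_sqrt (by positivity : 0 ≤ ‖a‖^2 + ‖w‖^2)
  have hab := norm_sub_le a b
  rw [Real.sqrt_le_left (by positivity)]
  nlinarith [norm_nonneg (a - b), norm_nonneg b, norm_nonneg a]

theorem le_pow_mul_of_le_mul_add_sq {y : ℕ → ℝ} {r K ρ : ℝ} (hy : ∀ t, 0 ≤ y t) (hK : 0 ≤ K)
    (hρ₀ : 0 ≤ ρ) (hρ₁ : ρ ≤ 1) (hstep : ∀ t, y (t+1) ≤ r * y t + K * y t ^ 2)
    (h₀ : r + K * y 0 ≤ ρ) (t : ℕ) :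
    y t ≤ ρ^t * y 0 := by
  induction t with
  | zero => simp
  | succ t ih =>
    have hyt : y t ≤ y 0 := ih.trans (mul_le_of_le_one_left (hy 0) (pow_le_one₀ hρ₀ hρ₁))
    calc y (t+1) ≤ r * y t + K * y t ^ 2 := hstep t
      _ ≤ (r + K * y 0) * y t := by
          nlinarith [mul_le_mul_of_nonneg_left hyt (mul_nonneg hK (hy t))]
      _ ≤ ρ * (ρ^t * y 0) := mul_le_mul h₀ ih (hy t) hρ₀
      _ = ρ^(t+1) * y 0 := by ring

namespace HeavyBall

/-- The Lyapunov form of the scalar recursion `x⁺ = 2c x - r² x⁻`, whose characteristic roots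
`c ± i √(r² - c²)` have modulus `r`. -/
noncomputable def energy (r c u v : ℝ) : ℝ := (u - c * v)^2 / (r^2 - c^2) + v^2

theorem energy_companion {r c : ℝ} (hD : r^2 - c^2 ≠ 0) (u v : ℝ) :
    energy r c (2 * c * u - r^2 * v) u = r^2 * energy r c u v := by
  unfold energy
  field_simp
  ring

theorem sq_add_sq_le_two_mul_energy {r c : ℝ} (hD : 0 < r^2 - c^2) (hr : r^2 ≤ 1) (u v : ℝ) :
    u^2 + v^2 ≤ 2 * energy r c u v := by
  rw [energy, div_add' _ _ _ hD.ne', mul_div_assoc', le_div_iff₀ hD]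
  nlinarith [sq_nonneg ((2 - (r^2 - c^2)) * u - 2 * c * v), mul_nonneg hD.le (sq_nonneg v)]

theorem energy_le {r c d₀ : ℝ} (hd₀ : 0 < d₀) (hD : d₀ ≤ r^2 - c^2) (hr : r^2 ≤ 1) (u v : ℝ) :
    energy r c u v ≤ 3 / d₀ * (u^2 + v^2) := by
  have hc : c^2 ≤ 1 := by linarith
  have hd₀₁ : d₀ ≤ 1 := by nlinarith [sq_nonneg c]
  calc energy r c u v ≤ (u - c * v)^2 / d₀ + v^2 / d₀ := by
        unfold energy
        gcongr
        exact le_div_self (sq_nonneg v) hd₀ hd₀₁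
    _ ≤ 3 / d₀ * (u^2 + v^2) := by
        rw [← add_div, div_mul_eq_mul_div]
        gcongr
        nlinarith [sq_nonneg (u + c * v), sq_nonneg v, mul_nonneg (sq_nonneg v) (sub_nonneg.2 hc)]

theorem half_sq_le_companion_gap {δ a : ℝ} (hδ : δ ≤ 1/2) (ha₀ : 4 * δ^2 ≤ a) (ha₁ : a ≤ 1) :
    δ^2 / 2 ≤ (1 - δ)^2 - ((1 + (1 - δ)^2 - a) / 2)^2 := by
  have hsub : 3/2 * δ^2 ≤ (1 - δ) - (1 + (1 - δ)^2 - a) / 2 := by nlinarith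
  have hadd : 5/8 ≤ (1 - δ) + (1 + (1 - δ)^2 - a) / 2 := by nlinarith
  nlinarith [mul_le_mul hsub hadd (by norm_num) (by nlinarith)]

section Lyapunov

variable {ι : Type*} [Fintype ι] {r : ℝ} {c : ι → ℝ}

variable (r c) in
noncomputable def companion (u v : EuclideanSpace ℝ ι) : EuclideanSpace ℝ ι :=
  WithLp.toLp 2 fun i => 2 * c i * u i - r^2 * v i

variable (r c) in
noncomputable def lyapunovVec (u v : EuclideanSpace ℝ ι) : EuclideanSpace ℝ ι :=
  WithLp.toLp 2 fun i => (u i - c i * v i) / √(r^2 - c i^2)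

variable (r c) in
noncomputable def lyapunov (u v : EuclideanSpace ℝ ι) : ℝ :=
  √(‖lyapunovVec r c u v‖^2 + ‖v‖^2)

theorem lyapunov_nonneg (u v : EuclideanSpace ℝ ι) : 0 ≤ lyapunov r c u v :=
  Real.sqrt_nonneg _

theorem norm_toLp_div_sqrt_sq (hD : ∀ i, 0 ≤ r^2 - c i^2) (w : ι → ℝ) :
    ‖(WithLp.toLp 2 fun i => w i / √(r^2 - c i^2) : EuclideanSpace ℝ ι)‖^2
      = ∑ i, w i ^ 2 / (r^2 - c i^2) := by
  simp only [EuclideanSpace.real_norm_sq_eq, div_pow, Real.sq_sqrt (hD _)]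

theorem lyapunov_sq (hD : ∀ i, 0 ≤ r^2 - c i^2) (u v : EuclideanSpace ℝ ι) :
    lyapunov r c u v ^ 2 = ∑ i, energy r (c i) (u i) (v i) := by
  rw [lyapunov, Real.sq_sqrt (by positivity), lyapunovVec, norm_toLp_div_sqrt_sq hD,
    EuclideanSpace.real_norm_sq_eq, ← Finset.sum_add_distrib]
  rfl

theorem lyapunov_companion (hr : 0 ≤ r) (hD : ∀ i, 0 < r^2 - c i^2) (u v : EuclideanSpace ℝ ι) :
    lyapunov r c (companion r c u v) u = r * lyapunov r c u v := by
  rw [← Real.sqrt_sq (mul_nonneg hr (lyapunov_nonneg u v)), ← Real.sqrt_sq (lyapunov_nonneg _ _),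
    mul_pow, lyapunov_sq (fun i => (hD i).le), lyapunov_sq (fun i => (hD i).le), Finset.mul_sum]
  exact congrArg _ (Finset.sum_congr rfl fun i _ => energy_companion (hD i).ne' _ _)

theorem lyapunov_sub_le {d₀ : ℝ} (hd₀ : 0 < d₀) (hD : ∀ i, d₀ ≤ r^2 - c i^2)
    (u v w : EuclideanSpace ℝ ι) :
    lyapunov r c (u - w) v ≤ lyapunov r c u v + ‖w‖ / √d₀ := by
  have hD₀ : ∀ i, 0 ≤ r^2 - c i^2 := fun i => hd₀.le.trans (hD i)
  set b : EuclideanSpace ℝ ι := WithLp.toLp 2 fun i => w i / √(r^2 - c i^2)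
  have hsplit : lyapunovVec r c (u - w) v = lyapunovVec r c u v - b := by
    ext i
    simp only [lyapunovVec, b, PiLp.sub_apply, ← sub_div]
    ring_nf
  have hb : ‖b‖ ≤ ‖w‖ / √d₀ := by
    refine (pow_le_pow_iff_left₀ (norm_nonneg b) (by positivity) two_ne_zero).1 ?_
    rw [div_pow, Real.sq_sqrt hd₀.le, norm_toLp_div_sqrt_sq hD₀,
      EuclideanSpace.real_norm_sq_eq, Finset.sum_div]
    gcongr with i
    exact hD i
  calc lyapunov r c (u - w) v = √(‖lyapunovVec r c u v - b‖^2 + ‖v‖^2) := by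
        rw [lyapunov, hsplit]
    _ ≤ lyapunov r c u v + ‖b‖ := sqrt_norm_sub_sq_add_sq_le _ b v
    _ ≤ lyapunov r c u v + ‖w‖ / √d₀ := by gcongr

theorem norm_sq_add_norm_sq_le_two_mul_lyapunov_sq (hD : ∀ i, 0 < r^2 - c i^2) (hr : r^2 ≤ 1)
    (u v : EuclideanSpace ℝ ι) :
    ‖u‖^2 + ‖v‖^2 ≤ 2 * lyapunov r c u v ^ 2 := by
  rw [lyapunov_sq (fun i => (hD i).le), Finset.mul_sum, EuclideanSpace.real_norm_sq_eq,
    EuclideanSpace.real_norm_sq_eq, ← Finset.sum_add_distrib]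
  gcongr with i
  exact sq_add_sq_le_two_mul_energy (hD i) hr _ _

theorem lyapunov_sq_le {d₀ : ℝ} (hd₀ : 0 < d₀) (hD : ∀ i, d₀ ≤ r^2 - c i^2)
    (hr : r^2 ≤ 1) (u v : EuclideanSpace ℝ ι) :
    lyapunov r c u v ^ 2 ≤ 3 / d₀ * (‖u‖^2 + ‖v‖^2) := by
  rw [lyapunov_sq (fun i => hd₀.le.trans (hD i)), EuclideanSpace.real_norm_sq_eq,
    EuclideanSpace.real_norm_sq_eq, ← Finset.sum_add_distrib, Finset.mul_sum]
  gcongr with i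
  exact energy_le hd₀ (hD i) hr _ _

theorem lyapunov_companion_sub_le (hr : 0 ≤ r) (hr₁ : r^2 ≤ 1) {d₀ : ℝ} (hd₀ : 0 < d₀)
    (hD : ∀ i, d₀ ≤ r^2 - c i^2) {u v w : EuclideanSpace ℝ ι} (hw : ‖w‖ ≤ ‖u‖^2) :
    lyapunov r c (companion r c u v - w) u
      ≤ r * lyapunov r c u v + 2 / √d₀ * lyapunov r c u v ^ 2 := by
  have hD₀ : ∀ i, 0 < r^2 - c i^2 := fun i => hd₀.trans_le (hD i)
  have hw' : ‖w‖ ≤ 2 * lyapunov r c u v ^ 2 := by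
    nlinarith [norm_sq_add_norm_sq_le_two_mul_lyapunov_sq hD₀ hr₁ u v, sq_nonneg (‖v‖)]
  calc lyapunov r c (companion r c u v - w) u ≤ r * lyapunov r c u v + ‖w‖ / √d₀ := by
        rw [← lyapunov_companion hr hD₀]
        exact lyapunov_sub_le hd₀ hD _ _ _
    _ ≤ r * lyapunov r c u v + 2 * lyapunov r c u v ^ 2 / √d₀ := by gcongr
    _ = r * lyapunov r c u v + 2 / √d₀ * lyapunov r c u v ^ 2 := by ring

theorem lyapunov_le_pow_mul (hr : 0 ≤ r) (hr₁ : r^2 ≤ 1) {d₀ : ℝ} (hd₀ : 0 < d₀)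
    (hD : ∀ i, d₀ ≤ r^2 - c i^2) {x g : ℕ → EuclideanSpace ℝ ι}
    (hx : ∀ t, x (t+2) = companion r c (x (t+1)) (x t) - g t) (hg : ∀ t, ‖g t‖ ≤ ‖x (t+1)‖^2)
    {ρ : ℝ} (hρ₀ : 0 ≤ ρ) (hρ₁ : ρ ≤ 1) (hsmall : r + 2 / √d₀ * lyapunov r c (x 1) (x 0) ≤ ρ)
    (t : ℕ) :
    lyapunov r c (x (t+1)) (x t) ≤ ρ^t * lyapunov r c (x 1) (x 0) :=
  le_pow_mul_of_le_mul_add_sq (y := fun t => lyapunov r c (x (t+1)) (x t))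
    (fun t => lyapunov_nonneg _ _) (by positivity) hρ₀ hρ₁
    (fun t => by simpa only [hx t] using lyapunov_companion_sub_le hr hr₁ hd₀ hD (hg t)) hsmall t

end Lyapunov

theorem perturbed_rate_diagonal {ι : Type*} [Fintype ι] {δ : ℝ} (hδ₀ : 0 < δ) (hδ : δ ≤ 1/2)
    {a : ι → ℝ} (ha : ∀ i, 4 * δ^2 ≤ a i ∧ a i ≤ 1) {x g : ℕ → EuclideanSpace ℝ ι}
    (hx : ∀ t i, x (t+2) i = (1 + (1 - δ)^2 - a i) * x (t+1) i - (1 - δ)^2 * x t i - g t i)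
    (hg : ∀ t, ‖g t‖ ≤ ‖x (t+1)‖^2) (hinit : √(‖x 1‖^2 + ‖x 0‖^2) ≤ δ^3 / 14) (t : ℕ) :
    √(‖x (t+2)‖^2 + ‖x (t+1)‖^2) ≤ (1 - δ/2)^(t+1) * (4/δ) * √(‖x 1‖^2 + ‖x 0‖^2) := by
  set r := 1 - δ
  set c : ι → ℝ := fun i => (1 + r^2 - a i) / 2
  set d₀ := δ^2 / 2
  set y : ℕ → ℝ := fun t => lyapunov r c (x (t+1)) (x t)
  set ε := √(‖x 1‖^2 + ‖x 0‖^2)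
  have hd₀ : 0 < d₀ := by positivity
  have hr₁ : r^2 ≤ 1 := by nlinarith
  have hD : ∀ i, d₀ ≤ r^2 - c i^2 := fun i => half_sq_le_companion_gap hδ (ha i).1 (ha i).2
  have hy₀ : y 0 ^ 2 ≤ 3 / d₀ * ε^2 := by
    rw [Real.sq_sqrt (by positivity)]
    exact lyapunov_sq_le hd₀ hD hr₁ _ _
  have hsmall : r + 2 / √d₀ * y 0 ≤ 1 - δ/2 := by
    suffices h : (2 / √d₀ * y 0)^2 ≤ (δ/2)^2 by
      have := (pow_le_pow_iff_left₀ (mul_nonneg (by positivity) (lyapunov_nonneg _ _))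
        (by positivity) two_ne_zero).1 h
      linarith
    calc (2 / √d₀ * y 0)^2 = 4 / d₀ * y 0 ^ 2 := by
          rw [mul_pow, div_pow, Real.sq_sqrt hd₀.le]; norm_num
      _ ≤ 4 / d₀ * (3 / d₀ * (δ^3 / 14)^2) := by gcongr; exact hy₀.trans (by gcongr)
      _ ≤ (δ/2)^2 := by
          simp only [d₀]
          field_simp
          nlinarith [pow_pos hδ₀ 6]
  have hρ : 0 ≤ 1 - δ/2 := by linarith
  have hdecay : y (t+1) ≤ (1 - δ/2)^(t+1) * y 0 :=
    lyapunov_le_pow_mul (by linarith) hr₁ hd₀ hD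
      (fun t => by ext i; simp only [companion, PiLp.sub_apply, c, hx]; ring) hg
      hρ (by linarith) hsmall (t+1)
  rw [Real.sqrt_le_left (by positivity)]
  calc ‖x (t+2)‖^2 + ‖x (t+1)‖^2 ≤ 2 * y (t+1) ^ 2 :=
        norm_sq_add_norm_sq_le_two_mul_lyapunov_sq (fun i => hd₀.trans_le (hD i)) hr₁ _ _
    _ ≤ 2 * ((1 - δ/2)^(t+1) * y 0) ^ 2 := by gcongr; exact lyapunov_nonneg _ _
    _ ≤ 2 * ((1 - δ/2)^(t+1))^2 * (3 / d₀ * ε^2) := by rw [mul_pow, ← mul_assoc]; gcongr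
    _ ≤ ((1 - δ/2)^(t+1) * (4/δ) * ε)^2 := by
        simp only [d₀]
        field_simp
        nlinarith [sq_nonneg ((1 - δ/2)^(t+1) * ε)]

theorem perturbed_rate {E : Type*} [NormedAddCommGroup E] [InnerProductSpace ℝ E]
    [FiniteDimensional ℝ E] {T : E →ₗ[ℝ] E} (hT : T.IsSymmetric) {δ : ℝ} (hδ₀ : 0 < δ)
    (hδ : δ ≤ 1/2) (hlow : ∀ u, 4 * δ^2 * ‖u‖^2 ≤ ⟪T u, u⟫) (hup : ∀ u, ‖T u‖ ≤ ‖u‖)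
    {e g : ℕ → E}
    (he : ∀ t, e (t+2) = e (t+1) - T (e (t+1)) + (1 - δ)^2 • (e (t+1) - e t) - g t)
    (hg : ∀ t, ‖g t‖ ≤ ‖e (t+1)‖^2) (hinit : √(‖e 1‖^2 + ‖e 0‖^2) ≤ δ^3 / 14) (t : ℕ) :
    √(‖e (t+2)‖^2 + ‖e (t+1)‖^2) ≤ (1 - δ/2)^(t+1) * (4/δ) * √(‖e 1‖^2 + ‖e 0‖^2) := by
  set b := hT.eigenvectorBasis rfl
  have hx : ∀ t i, b.repr (e (t+2)) i = (1 + (1 - δ)^2 - hT.eigenvalues rfl i)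
      * b.repr (e (t+1)) i - (1 - δ)^2 * b.repr (e t) i - b.repr (g t) i := by
    intro t i
    rw [he t]
    simp only [map_sub, map_add, map_smul, PiLp.sub_apply, PiLp.add_apply, PiLp.smul_apply,
      smul_eq_mul, b, hT.eigenvectorBasis_apply_self_apply, RCLike.ofReal_real_eq_id, id_eq]
    ring
  have hspec : ∀ i, 4 * δ^2 ≤ hT.eigenvalues rfl i ∧ hT.eigenvalues rfl i ≤ 1 := fun i =>
    ⟨hT.le_eigenvalues rfl hlow i,
      hT.eigenvalues_le rfl (fun u => (hup u).trans_eq (one_mul _).symm) i⟩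
  simpa only [LinearIsometryEquiv.norm_map] using
    perturbed_rate_diagonal hδ₀ hδ hspec hx (x := fun t => b.repr (e t))
      (g := fun t => b.repr (g t)) (by simpa only [LinearIsometryEquiv.norm_map] using hg)
      (by simpa only [LinearIsometryEquiv.norm_map] using hinit) t

theorem local_rate {E : Type*} [NormedAddCommGroup E] [InnerProductSpace ℝ E]
    [FiniteDimensional ℝ E] {f : E → ℝ} (hf : ContDiff ℝ 2 f) {μ α : ℝ} (hα : 0 ≤ α)
    (hsc : ∀ x z : E, f x + ⟪gradient f x, z - x⟫ + (μ/2) * ‖z - x‖^2 ≤ f z)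
    (hsmooth : ∀ x z : E, ‖gradient f x - gradient f z‖ ≤ α * ‖x - z‖)
    (hhess : ∀ x z : E, ‖fderiv ℝ (gradient f) x - fderiv ℝ (gradient f) z‖ ≤ α * ‖x - z‖)
    {wstar : E} (hwstar : ∀ w, f wstar ≤ f w) {η δ : ℝ} (hη : 0 ≤ η) (hηα : η * α ≤ 1)
    (hημ : 4 * δ^2 ≤ η * μ) (hδ₀ : 0 < δ) (hδ : δ ≤ 1/2) {W : ℕ → E}
    (hrec : ∀ t, W (t+2) = W (t+1) - η • gradient f (W (t+1)) + (1 - δ)^2 • (W (t+1) - W t))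
    (hinit : √(‖W 1 - wstar‖^2 + ‖W 0 - wstar‖^2) ≤ δ^3 / 14) (t : ℕ) :
    √(‖W (t+2) - wstar‖^2 + ‖W (t+1) - wstar‖^2)
      ≤ (1 - δ/2)^(t+1) * (4/δ) * √(‖W 1 - wstar‖^2 + ‖W 0 - wstar‖^2) := by
  set H := fderiv ℝ (gradient f) wstar
  have hHlow : ∀ u, μ * ‖u‖^2 ≤ ⟪H u, u⟫ :=
    mul_norm_sq_le_inner_fderiv_apply_self (differentiable_gradient hf wstar)
      (mul_norm_sq_le_inner_gradient_sub_gradient hsc)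
  have hHup : ∀ u, ‖H u‖ ≤ α * ‖u‖ := fun u => (H.le_opNorm u).trans <| by
    gcongr; exact norm_fderiv_le_of_lip' ℝ hα (Eventually.of_forall (hsmooth · wstar))
  have hres : ∀ w, ‖gradient f w - H (w - wstar)‖ ≤ α * ‖w - wstar‖^2 := fun w => by
    simpa [gradient_eq_zero_of_forall_le hwstar] using
      norm_sub_sub_fderiv_le_of_lipschitz_fderiv hα (differentiable_gradient hf) hhess wstar w
  refine perturbed_rate
    ((isSymmetric_fderiv_gradient (hf.contDiffAt (x := wstar))).smul (conj_trivial η)) hδ₀ hδ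
    (fun u => ?_) (fun u => ?_) (e := fun t => W t - wstar)
    (g := fun t => η • (gradient f (W (t+1)) - H (W (t+1) - wstar))) (fun t => ?_) (fun t => ?_)
    hinit t
  · rw [LinearMap.smul_apply, ContinuousLinearMap.coe_coe, real_inner_smul_left]
    nlinarith [mul_le_mul_of_nonneg_left (hHlow u) hη, sq_nonneg ‖u‖]
  · rw [LinearMap.smul_apply, ContinuousLinearMap.coe_coe, norm_smul, Real.norm_of_nonneg hη]
    nlinarith [mul_le_mul_of_nonneg_left (hHup u) hη, norm_nonneg u]
  · simp only [LinearMap.smul_apply, ContinuousLinearMap.coe_coe, hrec t]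
    module
  · rw [norm_smul, Real.norm_of_nonneg hη]
    nlinarith [mul_le_mul_of_nonneg_left (hres (W (t+1))) hη, sq_nonneg ‖W (t+1) - wstar‖]

end HeavyBall

/-- Here `W (t+1)` plays the role of `w_t` (so `W 0 = w₋₁`, `W 1 = w₀`). -/
theorem heavy_ball_local_accelerated_rate {d : ℕ}
    (f : EuclideanSpace ℝ (Fin d) → ℝ)
    (hf : ContDiff ℝ 2 f)
    (μ αs : ℝ) (hμ : 0 < μ) (hμα : μ ≤ αs)
    -- `μ`-strong convexity
    (hsc : ∀ x z : EuclideanSpace ℝ (Fin d),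
      f x + ⟪gradient f x, z - x⟫ + (μ/2) * ‖z - x‖^2 ≤ f z)
    -- `α`-smoothness
    (hsmooth : ∀ x z : EuclideanSpace ℝ (Fin d),
      ‖gradient f x - gradient f z‖ ≤ αs * ‖x - z‖)
    -- the Hessian is `α`-Lipschitz
    (hhess : ∀ x z : EuclideanSpace ℝ (Fin d),
      ‖fderiv ℝ (gradient f) x - fderiv ℝ (gradient f) z‖ ≤ αs * ‖x - z‖)
    (κ : ℝ) (hκ : κ = αs / μ)
    (wstar : EuclideanSpace ℝ (Fin d))
    -- `w*` is the (unique) minimizer of `f`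
    (hwstar : ∀ w, f wstar ≤ f w)
    (η β : ℝ) (hη : η = 1 / αs) (hβ : β = (1 - 1/(2 * Real.sqrt κ))^2)
    (W : ℕ → EuclideanSpace ℝ (Fin d))
    -- heavy-ball iteration `w_{t+1} = w_t - η ∇f(w_t) + β (w_t - w_{t-1})`
    (hrec : ∀ t : ℕ,
      W (t+2) = W (t+1) - η • gradient f (W (t+1)) + β • (W (t+1) - W t))
    -- the initial points are close enough to `w*`
    (hinit : Real.sqrt (‖W 1 - wstar‖^2 + ‖W 0 - wstar‖^2)
      ≤ 1 / (683 * (κ * Real.sqrt κ))) :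
    ∀ t : ℕ,
      Real.sqrt (‖W (t+2) - wstar‖^2 + ‖W (t+1) - wstar‖^2)
        ≤ (1 - 1/(4 * Real.sqrt κ))^(t+1) * (8 * Real.sqrt κ) *
          Real.sqrt (‖W 1 - wstar‖^2 + ‖W 0 - wstar‖^2) := by
  have hα : 0 < αs := hμ.trans_le hμα
  have hκ₁ : 1 ≤ κ := by rw [hκ, le_div_iff₀ hμ]; linarith
  have hsκ : 1 ≤ √κ := Real.one_le_sqrt.2 hκ₁
  have hκsq : √κ ^ 2 = κ := Real.sq_sqrt (by linarith)
  set δ := 1 / (2 * √κ) with hδ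
  have hημ : 4 * δ^2 = η * μ := by rw [hη, hδ, div_pow, mul_pow, hκsq, hκ]; field_simp; ring
  have hinit' : √(‖W 1 - wstar‖^2 + ‖W 0 - wstar‖^2) ≤ δ^3 / 14 := hinit.trans <| by
    rw [hδ, show κ * √κ = √κ ^ 3 by rw [pow_succ, hκsq]]
    field_simp
    nlinarith [pow_le_pow_left₀ zero_le_one hsκ 3]
  intro t
  rw [show 1 - 1 / (4 * √κ) = 1 - δ/2 by rw [hδ]; ring,
    show 8 * √κ = 4 / δ by rw [hδ]; field_simp; ring]
  exact HeavyBall.local_rate hf hα.le hsc hsmooth hhess hwstar (by rw [hη]; positivity)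
    (by rw [hη, one_div_mul_cancel hα.ne']) hημ.le (by positivity)
    (by rw [hδ, div_le_div_iff₀ (by positivity) two_pos]; linarith) (hβ ▸ hrec) hinit' t
end

section
/- (Exact decomposition of the heavy-ball dynamics near a point) Let f : ℝ^d → ℝ be differentiable, let β, r, η ∈ ℝ, let t₀ ∈ ℕ, and let H : ℝ^d → ℝ^d be a linear map (in the paper, H = ∇²f(w_{t₀})). Let (w_s), (m_s), (ξ_s) be sequences in ℝ^d such that, with g_s := ∇f(w_s) + ξ_s, one has m_s = β m_{s−1} + g_s for all s > t₀, w_{t₀+1} = w_{t₀} − r m_{t₀}, and w_{t₀+t} = w_{t₀+t−1} − η m_{t₀+t−1} for all t ≥ 2. Define ∇Q(w) := ∇f(w_{t₀}) + H(w − w_{t₀}) and G_s := I − η(Σ_{k=1}^{s} β^{s−k}) H, with empty products of the G's equal to the identity. Then for every t ≥ 1: w_{t₀+t} − w_{t₀} = (∏_{j=1}^{t−1} G_j)(−r m_{t₀}) + η·(−Σ_{s=1}^{t−1} (∏_{j=s+1}^{t−1} G_j) β^s m_{t₀}) + η·(−Σ_{s=1}^{t−1} (∏_{j=s+1}^{t−1}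 G_j) Σ_{k=1}^{s} β^{s−k} (∇f(w_{t₀+k}) − ∇Q(w_{t₀+s}))) + η·(−Σ_{s=1}^{t−1} (∏_{j=s+1}^{t−1} G_j) Σ_{k=1}^{s} β^{s−k} ∇f(w_{t₀})) + η·(−Σ_{s=1}^{t−1} (∏_{j=s+1}^{t−1} G_j) Σ_{k=1}^{s} β^{s−k} ξ_{t₀+k}). -/
open scoped BigOperators RealInnerProductSpace

/-- The ordered product `G a * G (a+1) * ⋯ * G b` of endomorphisms
(the identity when `a > b`). -/
noncomputable def prodIcc {M : Type*} [Monoid M] (G : ℕ → M) (a b : ℕ) : M :=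
  ((List.range' a (b + 1 - a)).map G).prod

/-- Exact decomposition of the heavy-ball dynamics near a point `w t₀`
(Lemma on the residual dynamics of SGD with Polyak's momentum). -/
theorem heavy_ball_exact_decomposition {d : ℕ}
    (f : EuclideanSpace ℝ (Fin d) → ℝ)
    (gf : EuclideanSpace ℝ (Fin d) → EuclideanSpace ℝ (Fin d))
    -- `f` is differentiable with gradient `gf`
    (hgf : ∀ x, HasFDerivAt f (innerSL ℝ (gf x)) x)
    (β r η : ℝ) (t₀ : ℕ)
    (H : Module.End ℝ (EuclideanSpace ℝ (Fin d)))
    (w m ξ : ℕ → EuclideanSpace ℝ (Fin d))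
    -- momentum recursion `m_s = β m_{s-1} + g_s` with `g_s = ∇f (w_s) + ξ_s`
    (hm : ∀ s : ℕ, t₀ < s → m s = β • m (s-1) + (gf (w s) + ξ s))
    (hw1 : w (t₀+1) = w t₀ - r • m t₀)
    (hwt : ∀ t : ℕ, 2 ≤ t → w (t₀+t) = w (t₀+t-1) - η • m (t₀+t-1))
    (G : ℕ → Module.End ℝ (EuclideanSpace ℝ (Fin d)))
    -- `G_s = I - η (Σ_{k=1}^s β^{s-k}) H`
    (hG : ∀ s : ℕ, G s = 1 - (η * ∑ k ∈ Finset.Icc 1 s, β^(s-k)) • H) :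
    ∀ t : ℕ, 1 ≤ t →
      w (t₀+t) - w t₀ =
        (prodIcc G 1 (t-1)) ((-r) • m t₀)
        + η • (- ∑ s ∈ Finset.Icc 1 (t-1), (prodIcc G (s+1) (t-1)) (β^s • m t₀))
        + η • (- ∑ s ∈ Finset.Icc 1 (t-1), (prodIcc G (s+1) (t-1))
            (∑ k ∈ Finset.Icc 1 s, β^(s-k) •
              (gf (w (t₀+k)) - (gf (w t₀) + H (w (t₀+s) - w t₀)))))
        + η • (- ∑ s ∈ Finset.Icc 1 (t-1), (prodIcc G (s+1) (t-1))
            (∑ k ∈ Finset.Icc 1 s, β^(s-k) • gf (w t₀)))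
        + η • (- ∑ s ∈ Finset.Icc 1 (t-1), (prodIcc G (s+1) (t-1))
            (∑ k ∈ Finset.Icc 1 s, β^(s-k) • ξ (t₀+k))) := by
  -- the G's commute
  have hcomm : ∀ i j, Commute (G i) (G j) := by
    intro i j
    rw [hG i, hG j]
    unfold Commute SemiconjBy
    simp only [mul_sub, sub_mul, one_mul, mul_one, smul_mul_assoc, mul_smul_comm, smul_smul]
    module
  -- empty product
  have hP0 : ∀ a b : ℕ, b + 1 ≤ a → prodIcc G a b = 1 := by
    intro a b h
    unfold prodIcc
    rw [Nat.sub_eq_zero_of_le h]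
    simp
  -- peel the top factor
  have hPstep : ∀ a b : ℕ, a ≤ b + 1 → prodIcc G a (b+1) = G (b+1) * prodIcc G a b := by
    intro a b h
    unfold prodIcc
    have h1 : b + 1 + 1 - a = (b + 1 - a) + 1 := by omega
    have h2 : a + (b + 1 - a) = b + 1 := by omega
    rw [h1, List.range'_1_concat, h2, List.map_append, List.prod_append]
    simp only [List.map_cons, List.map_nil, List.prod_cons, List.prod_nil, mul_one]
    refine (Commute.list_prod_right _ _ ?_).symm.eq
    intro x hx
    simp only [List.mem_map] at hx
    obtain ⟨i, _, rfl⟩ := hx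
    exact hcomm (b+1) i
  -- closed form for the momentum
  have hmform : ∀ s : ℕ, m (t₀ + s) = β ^ s • m t₀
      + ∑ k ∈ Finset.Icc 1 s, β ^ (s - k) • (gf (w (t₀ + k)) + ξ (t₀ + k)) := by
    intro s
    induction s with
    | zero => simp
    | succ n ih =>
      have h1 := hm (t₀ + (n+1)) (by omega)
      have h2 : t₀ + (n+1) - 1 = t₀ + n := by omega
      rw [h2, ih] at h1
      rw [h1, Finset.sum_Icc_succ_top (by omega : 1 ≤ n + 1)]
      have h3 : ∀ k ∈ Finset.Icc 1 n,
          β ^ (n + 1 - k) • (gf (w (t₀ + k)) + ξ (t₀ + k))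
          = β • (β ^ (n - k) • (gf (w (t₀ + k)) + ξ (t₀ + k))) := by
        intro k hk
        simp only [Finset.mem_Icc] at hk
        rw [smul_smul, ← pow_succ']
        congr 2
        omega
      rw [Finset.sum_congr rfl h3, ← Finset.smul_sum]
      simp only [Nat.sub_self, pow_zero, one_smul, smul_add, smul_smul, ← pow_succ']
      abel
  -- main induction
  intro t ht
  induction t with
  | zero => omega
  | succ n ih =>
    rcases eq_or_lt_of_le ht with h1 | h1
    · -- base case t = 1
      obtain rfl : n = 0 := by omega
      simp only [Nat.sub_self, Nat.add_sub_cancel]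
      rw [hP0 1 0 le_rfl, hw1]
      simp only [Finset.Icc_eq_empty (by omega : ¬(1:ℕ) ≤ 0), Finset.sum_empty, neg_zero,
        smul_zero, add_zero, Module.End.one_apply]
      module
    · -- inductive step
      have hn : 1 ≤ n := by omega
      obtain ⟨p, rfl⟩ : ∃ p, n = p + 1 := ⟨n - 1, by omega⟩
      have ihn := ih hn
      simp only [Nat.add_sub_cancel] at ihn ⊢
      -- key recursion for the displacement
      have key : w (t₀ + (p + 1 + 1)) - w t₀ =
          G (p+1) (w (t₀ + (p+1)) - w t₀)
          - η • ((β ^ (p+1)) • m t₀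
            + (∑ k ∈ Finset.Icc 1 (p+1), β ^ (p+1-k) •
                (gf (w (t₀+k)) - (gf (w t₀) + H (w (t₀+(p+1)) - w t₀))))
            + (∑ k ∈ Finset.Icc 1 (p+1), β ^ (p+1-k) • gf (w t₀))
            + (∑ k ∈ Finset.Icc 1 (p+1), β ^ (p+1-k) • ξ (t₀+k))) := by
        have hw2 := hwt (p+1+1) (by omega)
        have hred : t₀ + (p+1+1) - 1 = t₀ + (p+1) := by omega
        rw [hred] at hw2
        rw [hw2, hmform (p+1), hG (p+1)]
        have hsplit : (∑ k ∈ Finset.Icc 1 (p+1),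
              β ^ (p+1-k) • (gf (w (t₀+k)) + ξ (t₀+k)))
            = (∑ k ∈ Finset.Icc 1 (p+1), β ^ (p+1-k) •
                (gf (w (t₀+k)) - (gf (w t₀) + H (w (t₀+(p+1)) - w t₀))))
            + (∑ k ∈ Finset.Icc 1 (p+1), β ^ (p+1-k) • gf (w t₀))
            + (∑ k ∈ Finset.Icc 1 (p+1), β ^ (p+1-k) • (H (w (t₀+(p+1)) - w t₀)))
            + (∑ k ∈ Finset.Icc 1 (p+1), β ^ (p+1-k) • ξ (t₀+k)) := by
          rw [← Finset.sum_add_distrib, ← Finset.sum_add_distrib, ← Finset.sum_add_distrib]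
          refine Finset.sum_congr rfl fun k _ => ?_
          simp only [smul_sub, smul_add]
          abel
        rw [hsplit]
        have hS : ((η * ∑ k ∈ Finset.Icc 1 (p+1), β ^ (p+1-k)) • H)
              (w (t₀+(p+1)) - w t₀)
            = η • ∑ k ∈ Finset.Icc 1 (p+1), β ^ (p+1-k) •
                (H (w (t₀+(p+1)) - w t₀)) := by
          rw [LinearMap.smul_apply, mul_smul, Finset.sum_smul]
        simp only [LinearMap.sub_apply, Module.End.one_apply, hS]
        module
      -- the sum-peeling identity
      have hsum : ∀ v : ℕ → EuclideanSpace ℝ (Fin d),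
          (∑ s ∈ Finset.Icc 1 (p+1), (prodIcc G (s+1) (p+1)) (v s))
          = G (p+1) (∑ s ∈ Finset.Icc 1 p, (prodIcc G (s+1) p) (v s)) + v (p+1) := by
        intro v
        rw [Finset.sum_Icc_succ_top (by omega : 1 ≤ p + 1),
          hP0 (p+1+1) (p+1) le_rfl, map_sum]
        congr 1
        refine Finset.sum_congr rfl fun s hs => ?_
        simp only [Finset.mem_Icc] at hs
        rw [hPstep (s+1) p (by omega)]
        rfl
      rw [key]
      nth_rewrite 1 [ihn]
      rw [hsum, hsum, hsum, hsum, hPstep 1 p (by omega), Module.End.mul_apply]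
      simp only [map_add, map_smul, map_neg]
      module
end
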